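/- arXiv:1702.02067 — 14 statements merged into one kernel-verified Lean document; each statement's English description precedes it below -/
import Mathlib

section
/- For all n ≥ k ≥ 1, the (q,ᾱ)-Whitney numbers of the second kind satisfy W_{q,m,ᾱ}(n+1,k) = W_{q,m,ᾱ}(n,k−1) + [α_k + k·m]_q · W_{q,m,ᾱ}(n,k), and W_{q,m,ᾱ}(n,0) = [α_0]_q^n. -/
/-!
With `c j = [α_j + j·m]_q`, the polynomials `P_k = ∏_{j<k} (X - c j)` are monic of degree `k`,
hence a basis of `ℝ[X]`, and `W n k` is the `k`-th coordinate of `X^n` in it. Since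
`X · P_k = P_{k+1} + c k · P_k`, the coordinate of `X · p` at `k + 1` is the coordinate of `p` at
`k` plus `c (k + 1)` times its coordinate at `k + 1`, while at `0` it is `c 0` times that of `p`.
Taking `p = X^n` gives the recurrence and, by induction, `W n 0 = (c 0)^n`.
-/

open Polynomial Finset

/-- The q-number `[x]_q = (1 - q^x)/(1 - q)` (real exponent via rpow). -/
noncomputable def qnum (q x : ℝ) : ℝ := (1 - q ^ x) / (1 - q)

namespace Polynomial

variable {R : Type*} [CommRing R] [IsDomain R] (c : ℕ → R)

noncomputable def nodalSequence : Sequence R where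
  elems' k := Lagrange.nodal (range k) c
  degree_eq' k := by simp [Lagrange.degree_nodal]

noncomputable def nodalBasis : Module.Basis ℕ R R[X] :=
  (nodalSequence c).basis fun k => by
    simp [nodalSequence, Lagrange.nodal_monic.leadingCoeff]

lemma nodalBasis_apply (k : ℕ) : nodalBasis c k = Lagrange.nodal (range k) c :=
  Sequence.basis_eq_self _ _ k

lemma nodalBasis_zero : nodalBasis c 0 = 1 := by
  simp [nodalBasis_apply]

lemma X_mul_nodalBasis (k : ℕ) :
    X * nodalBasis c k = nodalBasis c (k + 1) + c k • nodalBasis c k := by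
  simp only [nodalBasis_apply, Lagrange.nodal_eq, prod_range_succ, smul_eq_C_mul]
  ring

lemma nodalBasis_repr_sum {N : ℕ} (a : ℕ → R) {k : ℕ} (hk : k < N) :
    (nodalBasis c).repr (∑ j ∈ range N, C (a j) * Lagrange.nodal (range j) c) k = a k := by
  simp [← nodalBasis_apply, ← smul_eq_C_mul, Finsupp.single_apply, hk]

lemma nodalBasis_repr_X_mul_succ (p : R[X]) (k : ℕ) :
    (nodalBasis c).repr (X * p) (k + 1)
      = (nodalBasis c).repr p k + c (k + 1) * (nodalBasis c).repr p (k + 1) := by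
  let b := nodalBasis c
  have h : Finsupp.lapply (k + 1) ∘ₗ b.repr.toLinearMap ∘ₗ LinearMap.mulLeft R X
      = Finsupp.lapply k ∘ₗ b.repr.toLinearMap
        + c (k + 1) • (Finsupp.lapply (k + 1) ∘ₗ b.repr.toLinearMap) := by
    refine b.ext fun j => ?_
    simp +contextual [b, X_mul_nodalBasis, Finsupp.single_apply]
  simpa using LinearMap.congr_fun h p

lemma nodalBasis_repr_X_mul_zero (p : R[X]) :
    (nodalBasis c).repr (X * p) 0 = c 0 * (nodalBasis c).repr p 0 := by
  let b := nodalBasis c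
  have h : Finsupp.lapply 0 ∘ₗ b.repr.toLinearMap ∘ₗ LinearMap.mulLeft R X
      = c 0 • (Finsupp.lapply 0 ∘ₗ b.repr.toLinearMap) := by
    refine b.ext fun j => ?_
    simp +contextual [b, X_mul_nodalBasis, Finsupp.single_apply]
  simpa using LinearMap.congr_fun h p

lemma nodalBasis_repr_X_pow_zero (n : ℕ) : (nodalBasis c).repr (X ^ n) 0 = c 0 ^ n := by
  induction n with
  | zero =>
    rw [pow_zero, pow_zero, ← nodalBasis_zero c, Module.Basis.repr_self, Finsupp.single_eq_same]
  | succ n ih => rw [pow_succ', nodalBasis_repr_X_mul_zero, ih, pow_succ']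

end Polynomial

theorem stmt4_general (q m : ℝ) (α : ℕ → ℝ)
    (W : ℕ → ℕ → ℝ)
    (hW : ∀ n : ℕ, (Polynomial.X : Polynomial ℝ) ^ n
      = ∑ k ∈ Finset.range (n + 1), Polynomial.C (W n k) * ∏ j ∈ Finset.range k, (Polynomial.X - Polynomial.C (qnum q (α j + j * m))))
    (n k : ℕ) (hk1 : 1 ≤ k) (hkn : k ≤ n) :
    W (n + 1) k = W n (k - 1) + qnum q (α k + k * m) * W n k ∧
    W n 0 = (qnum q (α 0)) ^ n := by
  set c : ℕ → ℝ := fun j => qnum q (α j + j * m)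
  have hWrepr : ∀ n k, k ≤ n → W n k = (nodalBasis c).repr (X ^ n) k := fun n k hk => by
    rw [hW n]
    exact (nodalBasis_repr_sum c (W n) (Nat.lt_succ_of_le hk)).symm
  obtain ⟨k, rfl⟩ := Nat.exists_eq_add_of_le' hk1
  refine ⟨?_, ?_⟩
  · rw [Nat.add_sub_cancel, hWrepr (n + 1) (k + 1) (by omega), hWrepr n k (by omega),
      hWrepr n (k + 1) hkn, pow_succ', nodalBasis_repr_X_mul_succ]
  · rw [hWrepr n 0 (Nat.zero_le n), nodalBasis_repr_X_pow_zero]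
    simp [c]

theorem stmt4 (q m : ℝ) (α : ℕ → ℝ) (hq0 : 0 < q) (hq1 : q < 1)
    (W : ℕ → ℕ → ℝ)
    (hW : ∀ n : ℕ, (Polynomial.X : Polynomial ℝ) ^ n
      = ∑ k ∈ Finset.range (n + 1), Polynomial.C (W n k) * ∏ j ∈ Finset.range k, (Polynomial.X - Polynomial.C (qnum q (α j + j * m))))
    (n k : ℕ) (hk1 : 1 ≤ k) (hkn : k ≤ n) :
    W (n + 1) k = W n (k - 1) + qnum q (α k + k * m) * W n k ∧
    W n 0 = (qnum q (α 0)) ^ n :=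
  stmt4_general q m α W hW n k hk1 hkn
end

section
/- Suppose the numbers [α_0]_q, [α_1+m]_q, …, [α_k+k·m]_q are pairwise distinct. Then for 0 ≤ k ≤ n, W_{q,m,ᾱ}(n,k) = Σ_{j=0}^k ([α_j + j·m]_q)^n / ∏_{i=0, i≠j}^k ([α_j + j·m]_q − [α_i + i·m]_q). -/
open Polynomial Finset

lemma lag_coeff {k : ℕ} {x : ℕ → ℝ} (hinj : Set.InjOn x (Finset.range (k+1)))
    (P : Polynomial ℝ) (hP : P.degree < ((k+1 : ℕ) : WithBot ℕ)) :
    ∑ j ∈ Finset.range (k+1),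
      P.eval (x j) / ∏ i ∈ (Finset.range (k+1)).erase j, (x j - x i) = P.coeff k := by
  have hcard : (Finset.range (k+1)).card = k+1 := by simp
  have h := Lagrange.eq_interpolate hinj (by rwa [hcard])
  conv_rhs => rw [h]
  rw [Lagrange.interpolate_apply, Polynomial.finset_sum_coeff]
  refine Finset.sum_congr rfl fun j hj => ?_
  rw [Polynomial.coeff_C_mul]
  have hb : (Lagrange.basis (Finset.range (k+1)) x j).coeff k
      = (∏ i ∈ (Finset.range (k+1)).erase j, (x j - x i))⁻¹ := by
    unfold Lagrange.basis Lagrange.basisDivisor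
    rw [Finset.prod_mul_distrib, ← map_prod, Polynomial.coeff_C_mul]
    have hM : (∏ i ∈ (Finset.range (k+1)).erase j, (X - C (x i)) : Polynomial ℝ).coeff k = 1 := by
      have hmon : (∏ i ∈ (Finset.range (k+1)).erase j, (X - C (x i)) : Polynomial ℝ).Monic :=
        monic_prod_of_monic _ _ fun i _ => monic_X_sub_C _
      have hnd : (∏ i ∈ (Finset.range (k+1)).erase j, (X - C (x i)) : Polynomial ℝ).natDegree
          = k := by
        rw [Polynomial.natDegree_prod _ _ fun i _ => X_sub_C_ne_zero _]
        simp [Finset.card_erase_of_mem hj]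
      have := hmon.coeff_natDegree
      rwa [hnd] at this
    rw [hM, mul_one, ← Finset.prod_inv_distrib]
  rw [hb, div_eq_mul_inv]

theorem stmt5 (q m : ℝ) (α : ℕ → ℝ) (hq0 : 0 < q) (hq1 : q < 1)
    (W : ℕ → ℕ → ℝ)
    (hW : ∀ n : ℕ, (Polynomial.X : Polynomial ℝ) ^ n
      = ∑ k ∈ Finset.range (n + 1), Polynomial.C (W n k) * ∏ j ∈ Finset.range k, (Polynomial.X - Polynomial.C (qnum q (α j + j * m))))
    (n k : ℕ) (hkn : k ≤ n)
    (hdist : ∀ i ≤ k, ∀ j ≤ k, i ≠ j → qnum q (α i + i * m) ≠ qnum q (α j + j * m)) :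
    W n k = ∑ j ∈ Finset.range (k + 1),
      (qnum q (α j + j * m)) ^ n /
        ∏ i ∈ (Finset.range (k + 1)).erase j, (qnum q (α j + j * m) - qnum q (α i + i * m)) := by
  set x : ℕ → ℝ := fun j => qnum q (α j + j * m) with hxdef
  have hinj : Set.InjOn x (Finset.range (k+1)) := by
    intro i hi j hj hij
    by_contra hne
    exact hdist i (Nat.lt_succ_iff.mp (Finset.mem_range.mp hi))
      j (Nat.lt_succ_iff.mp (Finset.mem_range.mp hj)) hne hij
  set D : ℕ → ℝ := fun j => ∏ i ∈ (Finset.range (k+1)).erase j, (x j - x i) with hDdef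
  have hev : ∀ j, x j ^ n
      = ∑ l ∈ Finset.range (n+1), W n l * ∏ i ∈ Finset.range l, (x j - x i) := by
    intro j
    have := congrArg (Polynomial.eval (x j)) (hW n)
    simpa [Polynomial.eval_finset_sum, Polynomial.eval_prod] using this
  symm
  calc ∑ j ∈ Finset.range (k+1), x j ^ n / D j
      = ∑ j ∈ Finset.range (k+1), ∑ l ∈ Finset.range (n+1),
          W n l * ((∏ i ∈ Finset.range l, (x j - x i)) / D j) := by
        refine Finset.sum_congr rfl fun j _ => ?_
        rw [hev j, Finset.sum_div]
        exact Finset.sum_congr rfl fun l _ => (mul_div_assoc _ _ _)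
    _ = ∑ l ∈ Finset.range (n+1), W n l *
          ∑ j ∈ Finset.range (k+1), (∏ i ∈ Finset.range l, (x j - x i)) / D j := by
        rw [Finset.sum_comm]
        exact Finset.sum_congr rfl fun l _ => (Finset.mul_sum _ _ _).symm
    _ = W n k := by
        rw [Finset.sum_eq_single k]
        · have key : ∑ j ∈ Finset.range (k+1),
              (∏ i ∈ Finset.range k, (x j - x i)) / D j = 1 := by
            set P : Polynomial ℝ := ∏ i ∈ Finset.range k, (X - C (x i)) with hPdef
            have hnd : P.natDegree = k := by
              rw [hPdef, Polynomial.natDegree_prod _ _ fun i _ => X_sub_C_ne_zero _]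
              simp
            have hdeg : P.degree < ((k+1 : ℕ) : WithBot ℕ) :=
              lt_of_le_of_lt Polynomial.degree_le_natDegree
                (by rw [hnd]; exact_mod_cast Nat.lt_succ_self k)
            have := lag_coeff hinj P hdeg
            have hc : P.coeff k = 1 := by
              have hmon : P.Monic := monic_prod_of_monic _ _ fun i _ => monic_X_sub_C _
              have := hmon.coeff_natDegree
              rwa [hnd] at this
            rw [hc] at this
            rw [← this]
            refine Finset.sum_congr rfl fun j _ => ?_
            congr 1
            simp [hPdef, Polynomial.eval_prod]
          rw [key, mul_one]
        · intro l hl hlk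
          rcases lt_or_gt_of_ne hlk with hlt | hgt
          · have key : ∑ j ∈ Finset.range (k+1),
                (∏ i ∈ Finset.range l, (x j - x i)) / D j = 0 := by
              set P : Polynomial ℝ := ∏ i ∈ Finset.range l, (X - C (x i)) with hPdef
              have hnd : P.natDegree = l := by
                rw [hPdef, Polynomial.natDegree_prod _ _ fun i _ => X_sub_C_ne_zero _]
                simp
              have hdeg : P.degree < ((k+1 : ℕ) : WithBot ℕ) :=
                lt_of_le_of_lt Polynomial.degree_le_natDegree
                  (by rw [hnd]; exact_mod_cast Nat.lt_succ_of_lt hlt)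
              have := lag_coeff hinj P hdeg
              have hc : P.coeff k = 0 :=
                Polynomial.coeff_eq_zero_of_natDegree_lt (by rw [hnd]; exact hlt)
              rw [hc] at this
              rw [← this]
              refine Finset.sum_congr rfl fun j _ => ?_
              congr 1
              simp [hPdef, Polynomial.eval_prod]
            rw [key, mul_zero]
          · have key : ∑ j ∈ Finset.range (k+1),
                (∏ i ∈ Finset.range l, (x j - x i)) / D j = 0 := by
              refine Finset.sum_eq_zero fun j hj => ?_
              have hjl : j ∈ Finset.range l :=
                Finset.mem_range.mpr (lt_of_lt_of_le (Finset.mem_range.mp hj) hgt)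
              rw [Finset.prod_eq_zero hjl (by ring), zero_div]
            rw [key, mul_zero]
        · intro h
          exact absurd (Finset.mem_range.mpr (Nat.lt_succ_of_le hkn)) h
end

section
/- For n ≥ k ≥ 1, W_{q,m,ᾱ}(n,k) = Σ_{j=k}^{n} W_{q,m,ᾱ}(j−1,k−1) · ([α_k + k·m]_q)^{n−j}. -/
open Polynomial Finset

noncomputable def Pb (c : ℕ → ℝ) (k : ℕ) : Polynomial ℝ :=
  ∏ j ∈ Finset.range k, (Polynomial.X - Polynomial.C (c j))

lemma Pb_monic (c : ℕ → ℝ) (k : ℕ) : (Pb c k).Monic :=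
  monic_prod_of_monic _ _ (fun j _ => monic_X_sub_C _)

lemma Pb_natDegree (c : ℕ → ℝ) (k : ℕ) : (Pb c k).natDegree = k := by
  rw [Pb, natDegree_prod]
  · simp [natDegree_X_sub_C]
  · intro j _; exact X_sub_C_ne_zero _

lemma Pb_succ (c : ℕ → ℝ) (k : ℕ) :
    Pb c (k + 1) = Pb c k * (Polynomial.X - Polynomial.C (c k)) := by
  rw [Pb, Finset.prod_range_succ]; rfl

lemma zero_of_sum (c : ℕ → ℝ) :
    ∀ (N : ℕ) (a : ℕ → ℝ),
      (∑ k ∈ Finset.range N, Polynomial.C (a k) * Pb c k) = 0 → ∀ k < N, a k = 0 := by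
  intro N
  induction N with
  | zero => intro a _ k hk; omega
  | succ N ih =>
    intro a h
    have hN : a N = 0 := by
      have h2 := congrArg (fun p => Polynomial.coeff p N) h
      simp only [finset_sum_coeff, coeff_C_mul, coeff_zero] at h2
      rw [Finset.sum_range_succ] at h2
      have h3 : ∀ k ∈ Finset.range N, a k * (Pb c k).coeff N = 0 := by
        intro k hk
        rw [coeff_eq_zero_of_natDegree_lt, mul_zero]
        rw [Pb_natDegree]; exact Finset.mem_range.mp hk
      rw [Finset.sum_eq_zero h3, zero_add] at h2
      have h4 : (Pb c N).coeff N = 1 := by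
        have := (Pb_monic c N).coeff_natDegree
        rwa [Pb_natDegree] at this
      rwa [h4, mul_one] at h2
    have h5 : (∑ k ∈ Finset.range N, Polynomial.C (a k) * Pb c k) = 0 := by
      rw [Finset.sum_range_succ, hN] at h
      simpa using h
    intro k hk
    rcases Nat.lt_succ_iff_lt_or_eq.mp hk with h' | h'
    · exact ih a h5 k h'
    · rw [h']; exact hN

lemma unique_of_sum (c : ℕ → ℝ) (N : ℕ) (a b : ℕ → ℝ)
    (h : (∑ k ∈ Finset.range N, Polynomial.C (a k) * Pb c k)
       = ∑ k ∈ Finset.range N, Polynomial.C (b k) * Pb c k) :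
    ∀ k < N, a k = b k := by
  intro k hk
  have h0 : (∑ k ∈ Finset.range N, Polynomial.C (a k - b k) * Pb c k) = 0 := by
    simp only [map_sub, sub_mul, Finset.sum_sub_distrib, h, sub_self]
  have h2 : a k - b k = 0 := zero_of_sum c N (fun k => a k - b k) h0 k hk
  linarith

theorem stmt6 (q m : ℝ) (α : ℕ → ℝ) (hq0 : 0 < q) (hq1 : q < 1)
    (W : ℕ → ℕ → ℝ)
    (hW : ∀ n : ℕ, (Polynomial.X : Polynomial ℝ) ^ n
      = ∑ k ∈ Finset.range (n + 1), Polynomial.C (W n k) * ∏ j ∈ Finset.range k, (Polynomial.X - Polynomial.C (qnum q (α j + j * m))))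
    (n k : ℕ) (hk1 : 1 ≤ k) (hkn : k ≤ n) :
    W n k = ∑ j ∈ Finset.Icc k n, W (j - 1) (k - 1) * (qnum q (α k + k * m)) ^ (n - j) := by
  set c : ℕ → ℝ := fun j => qnum q (α j + j * m) with hc
  have hW' : ∀ n : ℕ, (Polynomial.X : Polynomial ℝ) ^ n
      = ∑ k ∈ Finset.range (n + 1), Polynomial.C (W n k) * Pb c k := hW
  -- key representation of X^{n+1}
  have hrep : ∀ N : ℕ, (Polynomial.X : Polynomial ℝ) ^ (N + 1)
      = ∑ k ∈ Finset.range (N + 2),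
          Polynomial.C ((if 1 ≤ k then W N (k - 1) else 0) + (if k ≤ N then c k * W N k else 0))
            * Pb c k := by
    intro N
    have expand : ∀ k : ℕ,
        Polynomial.C ((if 1 ≤ k then W N (k - 1) else 0) + (if k ≤ N then c k * W N k else 0))
            * Pb c k
        = Polynomial.C (if 1 ≤ k then W N (k - 1) else 0) * Pb c k
          + Polynomial.C (if k ≤ N then c k * W N k else 0) * Pb c k := by
      intro k; rw [map_add, add_mul]
    rw [Finset.sum_congr rfl (fun k _ => expand k), Finset.sum_add_distrib]
    have s1 : (∑ k ∈ Finset.range (N + 2),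
        Polynomial.C (if 1 ≤ k then W N (k - 1) else 0) * Pb c k)
        = ∑ k ∈ Finset.range (N + 1), Polynomial.C (W N k) * Pb c (k + 1) := by
      rw [Finset.sum_range_succ']
      simp
    have s2 : (∑ k ∈ Finset.range (N + 2),
        Polynomial.C (if k ≤ N then c k * W N k else 0) * Pb c k)
        = ∑ k ∈ Finset.range (N + 1), Polynomial.C (c k * W N k) * Pb c k := by
      rw [Finset.sum_range_succ]
      simp only [Nat.lt_irrefl, if_neg (by omega : ¬ N + 1 ≤ N), map_zero, zero_mul, add_zero]
      apply Finset.sum_congr rfl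
      intro k hk
      rw [if_pos (Nat.lt_succ_iff.mp (Finset.mem_range.mp hk))]
    rw [s1, s2, ← Finset.sum_add_distrib]
    have term : ∀ k ∈ Finset.range (N + 1),
        Polynomial.C (W N k) * Pb c (k + 1) + Polynomial.C (c k * W N k) * Pb c k
        = Polynomial.X * (Polynomial.C (W N k) * Pb c k) := by
      intro k _
      rw [Pb_succ]
      ring_nf
      rw [map_mul]
      ring
    rw [Finset.sum_congr rfl term, ← Finset.mul_sum, ← hW' N, ← pow_succ']
  -- the recurrence
  have hrec : ∀ N j : ℕ, 1 ≤ j → j ≤ N →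
      W (N + 1) j = W N (j - 1) + c j * W N j := by
    intro N j h1 h2
    have := unique_of_sum c (N + 2) (fun k => W (N + 1) k)
      (fun k => (if 1 ≤ k then W N (k - 1) else 0) + (if k ≤ N then c k * W N k else 0))
      (by rw [← hW' (N + 1), ← hrep N]) j (by omega)
    simpa [if_pos h1, if_pos h2] using this
  -- diagonal values
  have hdiag : ∀ N : ℕ, W N N = 1 := by
    intro N
    induction N with
    | zero =>
      have h0 := hW' 0
      simp only [pow_zero, Finset.sum_range_one, Pb, Finset.range_zero,
        Finset.prod_empty, mul_one] at h0
      have := congrArg (fun p => Polynomial.coeff p 0) h0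
      simpa using this.symm
    | succ N ih =>
      have := unique_of_sum c (N + 2) (fun k => W (N + 1) k)
        (fun k => (if 1 ≤ k then W N (k - 1) else 0) + (if k ≤ N then c k * W N k else 0))
        (by rw [← hW' (N + 1), ← hrep N]) (N + 1) (by omega)
      simp only [if_pos (by omega : 1 ≤ N + 1), if_neg (by omega : ¬ N + 1 ≤ N),
        add_zero, Nat.add_sub_cancel] at this
      rw [this, ih]
  -- main induction on n ≥ k
  clear hW hW' hrep
  induction n, hkn using Nat.le_induction with
  | base =>
    rw [Finset.Icc_self, Finset.sum_singleton, Nat.sub_self, pow_zero, mul_one,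
      hdiag k, hdiag (k - 1)]
  | succ n hn ih =>
    rw [hrec n k hk1 hn, ih, Finset.sum_Icc_succ_top (by omega : k ≤ n + 1)]
    simp only [Nat.add_sub_cancel, Nat.sub_self, pow_zero, mul_one]
    rw [Finset.mul_sum, add_comm]
    congr 1
    apply Finset.sum_congr rfl
    intro j hj
    have hjn : j ≤ n := (Finset.mem_Icc.mp hj).2
    have h2 : n + 1 - j = (n - j) + 1 := by omega
    rw [h2, pow_succ, hc]
    ring
end

section
/- For each k ≥ 0, the ordinary generating function Σ_{n≥k} W_{q,m,ᾱ}(n,k) t^n equals t^k ∏_{j=0}^k (1 − [α_j + j·m]_q t)^{−1}, as an identity of formal power series (or for real |t| < 1/max_j [α_j+jm]_q). -/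
/-!
Expanding `X ^ (n + 1) = X * X ^ n` in the Newton basis `∏_{j<k} (X - a_j)`, using
`X * ∏_{j<k} (X - a_j) = ∏_{j<k+1} (X - a_j) + a_k ∏_{j<k} (X - a_j)`, and comparing coefficients
(the Newton basis is linearly independent) gives the triangular recurrence
`W (n+1) (k+1) = W n k + a_{k+1} W n (k+1)`. Read on the generating function of the `k`-th column,
it says `G_{k+1} (1 - a_{k+1} t) = t G_k`, while `G_0 (1 - a_0 t) = 1`; hence
`G_k ∏_{j≤k} (1 - a_j t) = t ^ k` by induction on `k`.
-/

open Polynomial Finset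

namespace Polynomial

variable {R : Type*} [CommRing R] [IsDomain R] {a : ℕ → R}

noncomputable def newtonSequence (a : ℕ → R) : Sequence R where
  elems' k := ∏ j ∈ range k, (X - C (a j))
  degree_eq' k := by
    rw [degree_eq_natDegree (monic_prod_X_sub_C a _).ne_zero,
      natDegree_prod_of_monic _ _ fun j _ => monic_X_sub_C (a j)]
    simp

theorem newtonSequence_apply (k : ℕ) :
    newtonSequence a k = ∏ j ∈ range k, (X - C (a j)) := rfl

theorem X_mul_newtonSequence (k : ℕ) :
    X * newtonSequence a k = newtonSequence a (k + 1) + a k • newtonSequence a k := by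
  rw [newtonSequence_apply, newtonSequence_apply, prod_range_succ, ← C_mul']
  ring

theorem eq_of_sum_smul_newtonSequence_eq {N : ℕ} {c d : ℕ → R}
    (h : ∑ k ∈ range N, c k • newtonSequence a k = ∑ k ∈ range N, d k • newtonSequence a k) :
    ∀ k < N, c k = d k := fun k hk =>
  linearIndependent_iff'ₛ.mp (newtonSequence a).linearIndependent _ c d h k (mem_range.mpr hk)

variable {W : ℕ → ℕ → R}

theorem newtonCoeff_zero_zero
    (hW : ∀ n, (X : R[X]) ^ n = ∑ k ∈ range (n + 1), C (W n k) * newtonSequence a k) :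
    W 0 0 = 1 := by
  simpa [newtonSequence_apply] using (congrArg (coeff · 0) (hW 0)).symm

theorem newtonCoeff_succ
    (hW : ∀ n, (X : R[X]) ^ n = ∑ k ∈ range (n + 1), C (W n k) * newtonSequence a k)
    (hW0 : ∀ n k, n < k → W n k = 0) (n : ℕ) :
    ∀ k < n + 2, W (n + 1) k = (if k = 0 then 0 else W n (k - 1)) + a k * W n k := by
  have hW' : ∀ n, (X : R[X]) ^ n = ∑ k ∈ range (n + 1), W n k • newtonSequence a k := by
    simpa only [C_mul'] using hW
  refine eq_of_sum_smul_newtonSequence_eq (a := a) ?_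
  rw [← hW']
  calc X ^ (n + 1) = X * X ^ n := pow_succ' _ _
    _ = ∑ k ∈ range (n + 1), W n k • (newtonSequence a (k + 1) + a k • newtonSequence a k) := by
      simp only [hW', mul_sum, mul_smul_comm, X_mul_newtonSequence]
    _ = ∑ k ∈ range (n + 2), (if k = 0 then 0 else W n (k - 1)) • newtonSequence a k
        + ∑ k ∈ range (n + 2), (a k * W n k) • newtonSequence a k := by
      rw [sum_range_succ' _ (n + 1), sum_range_succ _ (n + 1), hW0 n (n + 1) n.lt_succ_self]
      simp only [smul_add, sum_add_distrib, smul_smul, mul_comm (W n _)]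
      simp
    _ = _ := by simp only [← sum_add_distrib, add_smul]

theorem newtonCoeff_succ_zero
    (hW : ∀ n, (X : R[X]) ^ n = ∑ k ∈ range (n + 1), C (W n k) * newtonSequence a k)
    (hW0 : ∀ n k, n < k → W n k = 0) (n : ℕ) :
    W (n + 1) 0 = a 0 * W n 0 := by
  simpa using newtonCoeff_succ hW hW0 n 0 (by omega)

theorem newtonCoeff_succ_succ
    (hW : ∀ n, (X : R[X]) ^ n = ∑ k ∈ range (n + 1), C (W n k) * newtonSequence a k)
    (hW0 : ∀ n k, n < k → W n k = 0) (n k : ℕ) :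
    W (n + 1) (k + 1) = W n k + a (k + 1) * W n (k + 1) := by
  rcases lt_or_ge (k + 1) (n + 2) with hk | hk
  · simpa using newtonCoeff_succ hW hW0 n (k + 1) hk
  · rw [hW0 n k (by omega), hW0 n (k + 1) (by omega), hW0 (n + 1) (k + 1) (by omega)]
    ring

end Polynomial

namespace PowerSeries

section CommRing

variable {R : Type*} [CommRing R]

theorem mk_mul_one_sub_C_mul_X_eq {f : ℕ → R} {c : R} {φ : R⟦X⟧} (h0 : f 0 = coeff 0 φ)
    (hsucc : ∀ n, f (n + 1) = c * f n + coeff (n + 1) φ) : mk f * (1 - C c * X) = φ := by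
  ext (_ | n)
  · simp [h0]
  · rw [mul_sub, mul_one, map_sub, mul_left_comm, coeff_C_mul, coeff_succ_mul_X, coeff_mk,
      coeff_mk, hsucc]
    ring

theorem mk_mul_prod_one_sub_C_mul_X {a : ℕ → R} {W : ℕ → ℕ → R}
    (hW00 : W 0 0 = 1) (hW0 : ∀ k, W 0 (k + 1) = 0)
    (hrec0 : ∀ n, W (n + 1) 0 = a 0 * W n 0)
    (hrec : ∀ n k, W (n + 1) (k + 1) = W n k + a (k + 1) * W n (k + 1)) (k : ℕ) :
    mk (fun n => W n k) * ∏ j ∈ range (k + 1), (1 - C (a j) * X) = X ^ k := by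
  induction k with
  | zero =>
    rw [prod_range_one, pow_zero]
    exact mk_mul_one_sub_C_mul_X_eq (by simpa using hW00) fun n => by simp [hrec0]
  | succ k ih =>
    have hcol : mk (fun n => W n (k + 1)) * (1 - C (a (k + 1)) * X) = X * mk fun n => W n k :=
      mk_mul_one_sub_C_mul_X_eq (by simp [hW0]) fun n => by
        rw [coeff_succ_X_mul, coeff_mk, hrec]; ring
    rw [prod_range_succ, mul_comm _ (1 - _), ← mul_assoc, hcol, mul_assoc, ih, pow_succ']

end CommRing

variable {K ι : Type*} [Field K]

theorem prod_inv_distrib (s : Finset ι) (f : ι → K⟦X⟧) :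
    ∏ i ∈ s, (f i)⁻¹ = (∏ i ∈ s, f i)⁻¹ := by
  classical
  induction s using Finset.induction_on with
  | empty => simp
  | insert i s hi ih => rw [prod_insert hi, prod_insert hi, ih, PowerSeries.mul_inv_rev, mul_comm]

end PowerSeries

theorem stmt7_general (q m : ℝ) (α : ℕ → ℝ)
    (W : ℕ → ℕ → ℝ)
    (hW : ∀ n : ℕ, (Polynomial.X : Polynomial ℝ) ^ n
      = ∑ k ∈ Finset.range (n + 1), Polynomial.C (W n k) * ∏ j ∈ Finset.range k, (Polynomial.X - Polynomial.C (qnum q (α j + j * m))))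
    (hW0 : ∀ n k : ℕ, n < k → W n k = 0)
    (k : ℕ) :
    PowerSeries.mk (fun n => W n k) =
      PowerSeries.X ^ k *
        ∏ j ∈ Finset.range (k + 1),
          (1 - PowerSeries.C (R := ℝ) (qnum q (α j + j * m)) * PowerSeries.X)⁻¹ := by
  rw [PowerSeries.prod_inv_distrib, PowerSeries.eq_mul_inv_iff_mul_eq (by simp)]
  exact PowerSeries.mk_mul_prod_one_sub_C_mul_X (newtonCoeff_zero_zero hW)
    (fun k => hW0 0 (k + 1) k.succ_pos) (newtonCoeff_succ_zero hW hW0)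
    (newtonCoeff_succ_succ hW hW0) k

theorem stmt7 (q m : ℝ) (α : ℕ → ℝ) (hq0 : 0 < q) (hq1 : q < 1)
    (W : ℕ → ℕ → ℝ)
    (hW : ∀ n : ℕ, (Polynomial.X : Polynomial ℝ) ^ n
      = ∑ k ∈ Finset.range (n + 1), Polynomial.C (W n k) * ∏ j ∈ Finset.range k, (Polynomial.X - Polynomial.C (qnum q (α j + j * m))))
    (hW0 : ∀ n k : ℕ, n < k → W n k = 0)
    (k : ℕ) :
    PowerSeries.mk (fun n => W n k) =
      PowerSeries.X ^ k *
        ∏ j ∈ Finset.range (k + 1),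
          (1 - PowerSeries.C (R := ℝ) (qnum q (α j + j * m)) * PowerSeries.X)⁻¹ :=
  stmt7_general q m α W hW hW0 k
end

section
/- For 0 ≤ k ≤ n, W_{q,m,ᾱ}(n,k) = h_{n−k}([α_0]_q, [α_1+m]_q, …, [α_k+km]_q), the complete homogeneous symmetric polynomial of degree n−k; equivalently W_{q,m,ᾱ}(n,k) = Σ_{0 ≤ j_1 ≤ ⋯ ≤ j_{n−k} ≤ k} ∏_{i=1}^{n−k} [α_{j_i} + j_i·m]_q. -/
open Polynomial Finset

namespace Stmt8Aux

variable (b : ℕ → ℝ)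

/-- complete homogeneous symmetric sum in variables `b 0, …, b k`, degree `d` -/
noncomputable def H (k d : ℕ) : ℝ :=
  ∑ f ∈ (Finset.range (k + 1)).sym d, ((f : Multiset ℕ).map b).prod

lemma H_zero (k : ℕ) : H b k 0 = 1 := by
  simp only [H, Finset.sym_zero, Finset.sum_singleton]
  rfl

lemma sum_sym_insert (S : Finset ℕ) (a : ℕ) (ha : a ∉ S) (d : ℕ) :
    ∑ f ∈ (insert a S).sym (d + 1), ((f : Multiset ℕ).map b).prod
      = (∑ f ∈ S.sym (d + 1), ((f : Multiset ℕ).map b).prod)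
        + b a * ∑ f ∈ (insert a S).sym d, ((f : Multiset ℕ).map b).prod := by
  classical
  rw [← Finset.sum_filter_add_sum_filter_not ((insert a S).sym (d + 1)) (fun f => a ∈ f)]
  have h1 : (((insert a S).sym (d + 1)).filter (fun f => ¬ a ∈ f)) = S.sym (d + 1) := by
    ext f
    simp only [Finset.mem_filter, Finset.mem_sym_iff, Finset.mem_insert]
    constructor
    · rintro ⟨hmem, hna⟩ x hx
      rcases hmem x hx with h | h
      · exact absurd (h ▸ hx) hna
      · exact h
    · intro hf
      refine ⟨fun x hx => Or.inr (hf x hx), fun hc => ha (hf a hc)⟩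
  have h2 : ∑ f ∈ ((insert a S).sym (d + 1)).filter (fun f => a ∈ f),
      ((f : Multiset ℕ).map b).prod
      = b a * ∑ f ∈ (insert a S).sym d, ((f : Multiset ℕ).map b).prod := by
    rw [Finset.mul_sum]
    refine Finset.sum_bij' (fun f hf => f.erase a (Finset.mem_filter.mp hf).2)
      (fun g _ => a ::ₛ g) ?_ ?_ ?_ ?_ ?_
    · intro f hf
      rw [Finset.mem_sym_iff]
      intro x hx
      have hx' : x ∈ f := by
        have h2 : x ∈ ((f : Multiset ℕ).erase a) := by
          rw [← Sym.coe_erase (Finset.mem_filter.mp hf).2]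
          exact hx
        exact Multiset.mem_of_mem_erase h2
      exact Finset.mem_sym_iff.mp (Finset.mem_filter.mp hf).1 x hx'
    · intro g hg
      rw [Finset.mem_filter]
      refine ⟨Finset.mem_sym_iff.mpr ?_, Sym.mem_cons_self a g⟩
      intro x hx
      rcases Sym.mem_cons.mp hx with h | h
      · exact h ▸ Finset.mem_insert_self a S
      · exact Finset.mem_sym_iff.mp hg x h
    · intro f hf
      exact Sym.cons_erase _
    · intro g hg
      exact Sym.erase_cons_head g a
    · intro f hf
      have : (f : Multiset ℕ) = a ::ₘ (f.erase a (Finset.mem_filter.mp hf).2 : Multiset ℕ) := by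
        rw [Sym.coe_erase]
        exact (Multiset.cons_erase (Finset.mem_filter.mp hf).2).symm
      rw [this, Multiset.map_cons, Multiset.prod_cons]
  rw [h1, h2, add_comm]

lemma range_succ_eq_insert (k : ℕ) : Finset.range (k + 1) = insert k (Finset.range k) :=
  Finset.range_add_one

lemma H_rec (k d : ℕ) : H b (k + 1) (d + 1) = H b k (d + 1) + b (k + 1) * H b (k + 1) d := by
  rw [H, H, H, range_succ_eq_insert (k + 1), sum_sym_insert]
  simp

lemma H_zero_var (d : ℕ) : H b 0 (d + 1) = b 0 * H b 0 d := by
  have h : Finset.range 1 = insert 0 (∅ : Finset ℕ) := by rfl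
  rw [H, H, h, sum_sym_insert b ∅ 0 (by simp)]
  simp [Finset.sym_empty]

/-- Newton-basis polynomials -/
noncomputable def p (k : ℕ) : Polynomial ℝ := ∏ j ∈ Finset.range k, (X - C (b j))

lemma p_monic (k : ℕ) : (p b k).Monic :=
  monic_prod_of_monic _ _ fun j _ => monic_X_sub_C _

lemma p_natDegree (k : ℕ) : (p b k).natDegree = k := by
  rw [p, Polynomial.natDegree_prod]
  · simp
  · intro j _
    exact X_sub_C_ne_zero _

lemma Xp (k : ℕ) : X * p b k = p b (k + 1) + C (b k) * p b k := by
  have h : p b (k + 1) = (X - C (b k)) * p b k := by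
    rw [p, p, Finset.prod_range_succ]; ring
  rw [h]; ring

lemma ident (n : ℕ) :
    (X : Polynomial ℝ) ^ n = ∑ k ∈ Finset.range (n + 1), C (H b k (n - k)) * p b k := by
  induction n with
  | zero => simp [H_zero, p]
  | succ n ih =>
    have lhs : (X : Polynomial ℝ) ^ (n + 1)
        = ∑ k ∈ Finset.range (n + 1),
            (C (H b k (n - k)) * p b (k + 1) + C (b k * H b k (n - k)) * p b k) := by
      rw [pow_succ, ih, Finset.sum_mul]
      refine Finset.sum_congr rfl fun k _ => ?_
      have := Xp b k
      calc C (H b k (n - k)) * p b k * X = C (H b k (n - k)) * (X * p b k) := by ring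
        _ = _ := by rw [this, C_mul]; ring
    rw [lhs, Finset.sum_add_distrib]
    -- now handle RHS
    have rhs : ∑ k ∈ Finset.range (n + 2), C (H b k (n + 1 - k)) * p b k
        = (∑ k ∈ Finset.range (n + 1), C (H b (k + 1) (n - k)) * p b (k + 1))
          + C (H b 0 (n + 1)) * p b 0 := by
      rw [Finset.sum_range_succ']
      congr 1
      refine Finset.sum_congr rfl fun k _ => ?_
      have hnk : n + 1 - (k + 1) = n - k := by omega
      rw [hnk]
    rw [rhs]
    have split : ∀ k ∈ Finset.range (n + 1),
        C (H b (k + 1) (n - k)) * p b (k + 1)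
          = C (H b k (n - k)) * p b (k + 1)
            + C (if k < n then b (k + 1) * H b (k + 1) (n - k - 1) else 0) * p b (k + 1) := by
      intro k hk
      rcases lt_or_eq_of_le (Nat.lt_succ_iff.mp (Finset.mem_range.mp hk)) with h | h
      · rw [if_pos h]
        have hd : n - k = (n - k - 1) + 1 := by omega
        conv_lhs => rw [hd, H_rec, C_add, add_mul, ← hd]
      · subst h
        simp [H_zero]
    rw [Finset.sum_congr rfl split, Finset.sum_add_distrib]
    have second : (∑ k ∈ Finset.range (n + 1),
          C (if k < n then b (k + 1) * H b (k + 1) (n - k - 1) else 0) * p b (k + 1))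
          + C (H b 0 (n + 1)) * p b 0
        = ∑ k ∈ Finset.range (n + 1), C (b k * H b k (n - k)) * p b k := by
      rw [Finset.sum_range_succ, if_neg (lt_irrefl n), C_0, zero_mul, add_zero]
      rw [Finset.sum_range_succ' (fun k => C (b k * H b k (n - k)) * p b k) n]
      congr 1
      · refine Finset.sum_congr rfl fun k hk => ?_
        have hk' : k < n := Finset.mem_range.mp hk
        rw [if_pos hk', Nat.sub_sub]
      · rw [H_zero_var, Nat.sub_zero]
    rw [add_assoc, second]

lemma zero_of_sum (a : ℕ → ℝ) :
    ∀ N, (∑ k ∈ Finset.range (N + 1), C (a k) * p b k) = 0 → ∀ k ≤ N, a k = 0 := by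
  intro N
  induction N with
  | zero =>
    intro h k hk
    interval_cases k
    have : C (a 0) * p b 0 = 0 := by simpa using h
    have hp : p b 0 = 1 := by simp [p]
    rw [hp, mul_one] at this
    exact Polynomial.C_eq_zero.mp this
  | succ N ih =>
    intro h k hk
    have hlast : a (N + 1) = 0 := by
      have hc := congrArg (fun P => P.coeff (N + 1)) h
      simp only [Polynomial.finset_sum_coeff, Polynomial.coeff_zero] at hc
      rw [Finset.sum_eq_single_of_mem (N + 1) (Finset.self_mem_range_succ _)] at hc
      · have hco : (p b (N + 1)).coeff (N + 1) = 1 := by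
          have h2 := (p_monic b (N + 1)).coeff_natDegree
          rwa [p_natDegree] at h2
        rwa [Polynomial.coeff_C_mul, hco, mul_one] at hc
      · intro j hj hne
        have hj' : j < N + 1 := by
          have := Finset.mem_range.mp hj; omega
        rw [Polynomial.coeff_C_mul,
          Polynomial.coeff_eq_zero_of_natDegree_lt (by rw [p_natDegree]; exact hj'), mul_zero]
    rcases Nat.lt_succ_iff_lt_or_eq.mp (Nat.lt_succ_of_le hk) with h' | h'
    · apply ih _ _ (Nat.lt_succ_iff.mp h')
      have := h
      rw [Finset.sum_range_succ, hlast] at this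
      simpa using this
    · rw [h']; exact hlast

end Stmt8Aux

theorem stmt8 (q m : ℝ) (α : ℕ → ℝ) (hq0 : 0 < q) (hq1 : q < 1)
    (W : ℕ → ℕ → ℝ)
    (hW : ∀ n : ℕ, (Polynomial.X : Polynomial ℝ) ^ n
      = ∑ k ∈ Finset.range (n + 1), Polynomial.C (W n k) * ∏ j ∈ Finset.range k, (Polynomial.X - Polynomial.C (qnum q (α j + j * m))))
    (n k : ℕ) (hkn : k ≤ n) :
    W n k = ∑ f ∈ (Finset.range (k + 1)).sym (n - k),
      (Multiset.map (fun j => qnum q (α j + j * m)) (f : Multiset ℕ)).prod := by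
  set b : ℕ → ℝ := fun j => qnum q (α j + j * m) with hb
  have h1 : (X : Polynomial ℝ) ^ n
      = ∑ j ∈ Finset.range (n + 1), C (W n j) * Stmt8Aux.p b j := hW n
  have h2 := Stmt8Aux.ident b n
  have hsum : ∑ j ∈ Finset.range (n + 1),
      C (W n j - Stmt8Aux.H b j (n - j)) * Stmt8Aux.p b j = 0 := by
    simp only [C_sub, sub_mul, Finset.sum_sub_distrib]
    rw [← h1, ← h2, sub_self]
  have hz := Stmt8Aux.zero_of_sum b (fun j => W n j - Stmt8Aux.H b j (n - j)) n hsum k hkn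
  have hWk : W n k = Stmt8Aux.H b k (n - k) := by
    have : W n k - Stmt8Aux.H b k (n - k) = 0 := hz
    linarith
  exact hWk
end

section
/- (Mansour–Schork–Shattuck closed form) Let (a_i)_{i≥0} and (b_i)_{i≥0} be sequences of real numbers with b_i ≠ b_j for i ≠ j, and let u(n,k) satisfy u(n,k) = u(n−1,k−1) + (a_{n−1} + b_k) u(n−1,k) with u(n,0) = ∏_{i=0}^{n−1}(a_i + b_0) and u(0,k) = δ_{0k}. Then for all n, k, u(n,k) = Σ_{j=0}^k ∏_{i=0}^{n−1}(b_j + a_i) / ∏_{i=0, i≠j}^k (b_j − b_i). -/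
open Polynomial Finset

lemma lc_basisDivisor (x y : ℝ) : (Lagrange.basisDivisor x y).leadingCoeff = (x - y)⁻¹ := by
  rcases eq_or_ne x y with h | h
  · simp [h, Lagrange.basisDivisor_self]
  · rw [Lagrange.basisDivisor, leadingCoeff_mul, leadingCoeff_C,
      (monic_X_sub_C y).leadingCoeff, mul_one]

lemma key (b : ℕ → ℝ) (hb : ∀ i j : ℕ, i ≠ j → b i ≠ b j) (k : ℕ) (hk : 1 ≤ k) :
    ∑ j ∈ Finset.range (k+1), (∏ i ∈ (Finset.range (k+1)).erase j, (b j - b i))⁻¹ = 0 := by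
  have hinj : Set.InjOn b (Finset.range (k+1)) := by
    intro i _ j _ h
    by_contra hne
    exact hb i j hne h
  have hsum := Lagrange.sum_basis hinj (by simp : (Finset.range (k+1)).Nonempty)
  have h2 := congrArg (fun p : ℝ[X] => p.coeff k) hsum
  have hcard : #(Finset.range (k+1)) = k + 1 := by simp
  have hcoeff : ∀ j ∈ Finset.range (k+1),
      (Lagrange.basis (Finset.range (k+1)) b j).coeff k
        = (∏ i ∈ (Finset.range (k+1)).erase j, (b j - b i))⁻¹ := by
    intro j hj
    have hnd : (Lagrange.basis (Finset.range (k+1)) b j).natDegree = k := by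
      rw [Lagrange.natDegree_basis hinj hj, hcard]; rfl
    have hl : (Lagrange.basis (Finset.range (k+1)) b j).coeff k
        = (Lagrange.basis (Finset.range (k+1)) b j).leadingCoeff := by
      rw [Polynomial.leadingCoeff, hnd]
    rw [hl, Lagrange.basis, leadingCoeff_prod]
    rw [← Finset.prod_inv_distrib]
    exact Finset.prod_congr rfl fun i _ => lc_basisDivisor _ _
  rw [finset_sum_coeff, Finset.sum_congr rfl hcoeff] at h2
  rw [h2, coeff_one]
  simp [Nat.one_le_iff_ne_zero.mp hk]

theorem stmt11 (a b : ℕ → ℝ) (hb : ∀ i j : ℕ, i ≠ j → b i ≠ b j)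
    (u : ℕ → ℕ → ℝ)
    (hrec : ∀ n k : ℕ, 1 ≤ n → 1 ≤ k →
      u n k = u (n - 1) (k - 1) + (a (n - 1) + b k) * u (n - 1) k)
    (hu0 : ∀ n : ℕ, u n 0 = ∏ i ∈ Finset.range n, (a i + b 0))
    (h0k : ∀ k : ℕ, u 0 k = if k = 0 then (1 : ℝ) else 0) :
    ∀ n k : ℕ, u n k = ∑ j ∈ Finset.range (k + 1),
      (∏ i ∈ Finset.range n, (b j + a i)) /
        ∏ i ∈ (Finset.range (k + 1)).erase j, (b j - b i) := by
  intro n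
  induction n with
  | zero =>
    intro k
    rw [h0k]
    rcases Nat.eq_zero_or_pos k with hk | hk
    · subst hk; simp
    · have : ∀ j ∈ Finset.range (k+1),
          (∏ i ∈ Finset.range 0, (b j + a i)) /
            ∏ i ∈ (Finset.range (k + 1)).erase j, (b j - b i)
          = (∏ i ∈ (Finset.range (k + 1)).erase j, (b j - b i))⁻¹ := by
        intro j _; simp [one_div]
      rw [Finset.sum_congr rfl this, key b hb k hk]
      simp [Nat.pos_iff_ne_zero.mp hk]
  | succ n ih =>
    intro k
    cases k with
    | zero =>
      rw [hu0]
      rw [Finset.sum_range_one]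
      have : (Finset.range 1).erase 0 = ∅ := rfl
      rw [this, Finset.prod_empty, div_one]
      exact Finset.prod_congr rfl fun i _ => add_comm _ _
    | succ k =>
      rw [hrec (n+1) (k+1) (by omega) (by omega)]
      simp only [Nat.add_sub_cancel]
      rw [ih k, ih (k+1)]
      have h1 : ∀ j ∈ Finset.range (k+2),
          (∏ i ∈ Finset.range (n+1), (b j + a i)) /
              ∏ i ∈ (Finset.range (k + 2)).erase j, (b j - b i)
          = ((∏ i ∈ Finset.range n, (b j + a i)) * (b j - b (k+1))) /
              (∏ i ∈ (Finset.range (k + 2)).erase j, (b j - b i))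
            + (a n + b (k+1)) * ((∏ i ∈ Finset.range n, (b j + a i)) /
              ∏ i ∈ (Finset.range (k + 2)).erase j, (b j - b i)) := by
        intro j _
        rw [Finset.prod_range_succ]
        ring
      rw [eq_comm, Finset.sum_congr rfl h1, Finset.sum_add_distrib, ← Finset.mul_sum]
      congr 1
      rw [Finset.sum_range_succ]
      have hz : (∏ i ∈ Finset.range n, (b (k+1) + a i)) * (b (k+1) - b (k+1)) /
          (∏ i ∈ (Finset.range (k + 2)).erase (k+1), (b (k+1) - b i)) = 0 := by
        simp
      rw [hz, add_zero]
      refine Finset.sum_congr rfl fun j hj => ?_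
      have hjk : j < k + 1 := Finset.mem_range.mp hj
      have hset : (Finset.range (k+2)).erase j
          = insert (k+1) ((Finset.range (k+1)).erase j) := by
        ext x
        simp only [Finset.mem_erase, Finset.mem_range, Finset.mem_insert]
        omega
      have hx : b j - b (k+1) ≠ 0 := sub_ne_zero.mpr (hb j (k+1) (by omega))
      rw [hset, Finset.prod_insert (by simp), mul_comm (b j - b (k+1)),
        mul_div_mul_right _ _ hx]
end

section
/- Under the hypotheses of the Mansour–Schork–Shattuck recurrence, u(n,k) also satisfies u(n,k) = Σ_{j=k}^n u(j−1,k−1) ∏_{i=j}^{n−1}(a_i + b_k) for n ≥ k ≥ 1. -/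
open Polynomial Finset

theorem stmt12 (a b : ℕ → ℝ)
    (u : ℕ → ℕ → ℝ)
    (hrec : ∀ n k : ℕ, 1 ≤ n → 1 ≤ k →
      u n k = u (n - 1) (k - 1) + (a (n - 1) + b k) * u (n - 1) k)
    (hu0 : ∀ n : ℕ, u n 0 = ∏ i ∈ Finset.range n, (a i + b 0))
    (h0k : ∀ k : ℕ, u 0 k = if k = 0 then (1 : ℝ) else 0)
    (n k : ℕ) (hk1 : 1 ≤ k) (hkn : k ≤ n) :
    u n k = ∑ j ∈ Finset.Icc k n, u (j - 1) (k - 1) * ∏ i ∈ Finset.Ico j n, (a i + b k) := by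
  have hzero : ∀ m k : ℕ, m < k → u m k = 0 := by
    intro m
    induction m with
    | zero => intro k hk; rw [h0k, if_neg (by omega)]
    | succ m ih =>
      intro k hk
      rw [hrec (m+1) k (by omega) (by omega)]
      simp only [Nat.add_sub_cancel]
      rw [ih (k-1) (by omega), ih k (by omega)]
      ring
  induction n, hkn using Nat.le_induction with
  | base =>
    rw [hrec k k hk1 hk1, hzero (k-1) k (by omega)]
    simp
  | succ n hn ih =>
    rw [hrec (n+1) k (by omega) hk1]
    simp only [Nat.add_sub_cancel]
    rw [ih, Finset.sum_Icc_succ_top (by omega : k ≤ n+1), Finset.mul_sum]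
    simp only [Nat.add_sub_cancel, Finset.Ico_self, Finset.prod_empty, mul_one]
    rw [add_comm]
    congr 1
    apply Finset.sum_congr rfl
    intro j hj
    have hjn : j ≤ n := (Finset.mem_Icc.mp hj).2
    rw [Finset.prod_Ico_succ_top hjn]
    ring
end

section
/- The ᾱ-Whitney-Lah numbers satisfy ∏_{i=0}^{n−1}(x + α_i + i·m) = Σ_{k=0}^n L_{m,ᾱ}(n,k) · ∏_{j=0}^{k−1}(x − α_j − j·m) as an identity of polynomials in x. -/
/-!
Substituting `-x` into the defining product of the first-kind numbers gives
`∏ (x + α_i + i m) = ∑ (-1)^(n-k) w(n,k) x^k`; expanding each `x^k` in the basis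
`∏_{j<k} (x - α_j - j m)` through the second-kind numbers and exchanging the two sums leaves
exactly `L(n,k)` as the coefficient of the `k`-th basis polynomial.
-/

open Polynomial Finset

theorem neg_one_pow_mul_neg_one_pow_of_le {R : Type*} [Monoid R] [HasDistribNeg R] {k n : ℕ}
    (hk : k ≤ n) : (-1 : R) ^ n * (-1) ^ k = (-1) ^ (n - k) := by
  rw [← Nat.sub_add_cancel hk, pow_add, mul_assoc, ← pow_add, ← two_mul, pow_mul]
  simp

theorem prod_X_add_C_eq_sum_of_prod_X_sub_C_eq_sum {R : Type*} [CommRing R] (a c : ℕ → R)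
    (n : ℕ) (h : ∏ j ∈ range n, (X - C (a j)) = ∑ k ∈ range (n + 1), C (c k) * X ^ k) :
    ∏ j ∈ range n, (X + C (a j)) = ∑ k ∈ range (n + 1), C ((-1) ^ (n - k) * c k) * X ^ k := by
  have hcomp := congrArg (·.comp (-X)) h
  simp only [Polynomial.prod_comp, Polynomial.sum_comp, sub_comp, X_comp, C_comp, mul_comp,
    pow_comp] at hcomp
  have hneg : ∏ j ∈ range n, (-X - C (a j)) = (-1) ^ n * ∏ j ∈ range n, (X + C (a j)) := by
    calc ∏ j ∈ range n, (-X - C (a j)) = ∏ j ∈ range n, -(X + C (a j)) :=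
          prod_congr rfl fun _ _ ↦ by ring
      _ = (-1) ^ n * ∏ j ∈ range n, (X + C (a j)) := by rw [prod_neg, card_range]
  calc ∏ j ∈ range n, (X + C (a j))
      = (-1) ^ n * ∑ k ∈ range (n + 1), C (c k) * (-X) ^ k := by
        rw [← hcomp, hneg, ← mul_assoc, ← mul_pow]; simp
    _ = ∑ k ∈ range (n + 1), C ((-1) ^ (n - k) * c k) * X ^ k := by
        rw [mul_sum]
        refine sum_congr rfl fun k hk ↦ ?_
        rw [neg_pow, C_mul, C_pow, C_neg, C_1,
          ← neg_one_pow_mul_neg_one_pow_of_le (Nat.lt_succ_iff.1 (mem_range.1 hk))]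
        ring

theorem sum_C_mul_X_pow_eq_sum_of_X_pow_eq {R : Type*} [CommRing R] (P : ℕ → R[X])
    (W : ℕ → ℕ → R) (hW : ∀ k, (X : R[X]) ^ k = ∑ j ∈ range (k + 1), C (W k j) * P j)
    (c : ℕ → R) (n : ℕ) :
    ∑ k ∈ range (n + 1), C (c k) * X ^ k
      = ∑ j ∈ range (n + 1), C (∑ k ∈ Icc j n, c k * W k j) * P j := by
  simp_rw [hW, mul_sum, map_sum, sum_mul, ← mul_assoc, ← C_mul]
  simp_rw [range_eq_Ico, ← Ico_add_one_right_eq_Icc]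
  exact (sum_Ico_Ico_comm 0 (n + 1) _).symm

theorem stmt13_general (m : ℝ) (α : ℕ → ℝ)
    (w W L : ℕ → ℕ → ℝ)
    (hw : ∀ n : ℕ, ∏ j ∈ Finset.range n, (Polynomial.X - Polynomial.C (α j + j * m))
      = ∑ k ∈ Finset.range (n + 1), Polynomial.C (w n k) * Polynomial.X ^ k)
    (hW : ∀ n : ℕ, (Polynomial.X : Polynomial ℝ) ^ n
      = ∑ k ∈ Finset.range (n + 1), Polynomial.C (W n k) * ∏ j ∈ Finset.range k, (Polynomial.X - Polynomial.C (α j + j * m)))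
    (hL : ∀ n k : ℕ, k ≤ n →
      L n k = ∑ j ∈ Finset.Icc k n, (-1 : ℝ) ^ (n - j) * w n j * W j k)
    (n : ℕ) :
    ∏ i ∈ Finset.range n, (Polynomial.X + Polynomial.C (α i + i * m))
      = ∑ k ∈ Finset.range (n + 1), Polynomial.C (L n k) *
          ∏ j ∈ Finset.range k, (Polynomial.X - Polynomial.C (α j + j * m)) := by
  rw [prod_X_add_C_eq_sum_of_prod_X_sub_C_eq_sum _ (w n) n (hw n),
    sum_C_mul_X_pow_eq_sum_of_X_pow_eq (fun k ↦ ∏ j ∈ range k, (X - C (α j + j * m))) W hW]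
  refine sum_congr rfl fun k hk ↦ ?_
  rw [hL n k (Nat.lt_succ_iff.1 (mem_range.1 hk))]

theorem stmt13 (m : ℝ) (α : ℕ → ℝ)
    (w W L : ℕ → ℕ → ℝ)
    (hw : ∀ n : ℕ, ∏ j ∈ Finset.range n, (Polynomial.X - Polynomial.C (α j + j * m))
      = ∑ k ∈ Finset.range (n + 1), Polynomial.C (w n k) * Polynomial.X ^ k)
    (hW : ∀ n : ℕ, (Polynomial.X : Polynomial ℝ) ^ n
      = ∑ k ∈ Finset.range (n + 1), Polynomial.C (W n k) * ∏ j ∈ Finset.range k, (Polynomial.X - Polynomial.C (α j + j * m)))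
    (hL : ∀ n k : ℕ, k ≤ n →
      L n k = ∑ j ∈ Finset.Icc k n, (-1 : ℝ) ^ (n - j) * w n j * W j k)
    (hL0 : ∀ n k : ℕ, n < k → L n k = 0)
    (n : ℕ) :
    ∏ i ∈ Finset.range n, (Polynomial.X + Polynomial.C (α i + i * m))
      = ∑ k ∈ Finset.range (n + 1), Polynomial.C (L n k) *
          ∏ j ∈ Finset.range k, (Polynomial.X - Polynomial.C (α j + j * m)) :=
  stmt13_general m α w W L hw hW hL n
end

section
/- For n ≥ k ≥ 1, the ᾱ-Whitney-Lah numbers satisfy L_{m,ᾱ}(n+1,k) = L_{m,ᾱ}(n,k−1) + (α_k + α_n + (k+n)m) L_{m,ᾱ}(n,k), and L_{m,ᾱ}(n,0) = ∏_{i=0}^{n−1}(α_0 + α_i + i·m). -/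
open Polynomial Finset

lemma uniq_aux (c : ℕ → ℝ) : ∀ (N : ℕ) (d : ℕ → ℝ),
    (∑ k ∈ Finset.range N, Polynomial.C (d k) * ∏ j ∈ Finset.range k, (Polynomial.X - Polynomial.C (c j)) = 0) →
    ∀ k < N, d k = 0 := by
  intro N
  induction N with
  | zero => intro d _ k hk; omega
  | succ N ih =>
    intro d h k hk
    have hdeg : ∀ k : ℕ, (∏ j ∈ Finset.range k, (X - C (c j))).natDegree = k := by
      intro k
      rw [Polynomial.natDegree_prod]
      · simp
      · intro i _; exact X_sub_C_ne_zero (c i)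
    have hmon : ∀ k : ℕ, (∏ j ∈ Finset.range k, (X - C (c j))).Monic :=
      fun k => monic_prod_of_monic _ _ fun i _ => monic_X_sub_C (c i)
    rw [Finset.sum_range_succ] at h
    have hdN : d N = 0 := by
      have := congrArg (fun p => Polynomial.coeff p N) h
      simp only [Polynomial.coeff_add, Polynomial.coeff_zero, Polynomial.finset_sum_coeff,
        Polynomial.coeff_C_mul] at this
      have h1 : ∀ k ∈ Finset.range N, d k * (∏ j ∈ Finset.range k, (X - C (c j))).coeff N = 0 := by
        intro k hk
        rw [Polynomial.coeff_eq_zero_of_natDegree_lt, mul_zero]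
        rw [hdeg]; exact Finset.mem_range.mp hk
      rw [Finset.sum_eq_zero h1, zero_add] at this
      have h2 : (∏ j ∈ Finset.range N, (X - C (c j))).coeff N = 1 := by
        have := (hmon N).coeff_natDegree
        rwa [hdeg] at this
      rw [h2, mul_one] at this
      exact this
    rcases Nat.lt_succ_iff_lt_or_eq.mp hk with h' | h'
    · apply ih d _ k h'
      rw [hdN] at h; simpa using h
    · rw [h']; exact hdN

theorem stmt14 (m : ℝ) (α : ℕ → ℝ)
    (L : ℕ → ℕ → ℝ)
    (hL : ∀ n : ℕ, ∏ i ∈ Finset.range n, (Polynomial.X + Polynomial.C (α i + i * m))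
      = ∑ k ∈ Finset.range (n + 1), Polynomial.C (L n k) * ∏ j ∈ Finset.range k, (Polynomial.X - Polynomial.C (α j + j * m)))
    (n k : ℕ) (hk1 : 1 ≤ k) (hkn : k ≤ n) :
    L (n + 1) k = L n (k - 1) + (α k + α n + (k + n) * m) * L n k ∧
    L n 0 = ∏ i ∈ Finset.range n, (α 0 + α i + i * m) := by
  constructor
  · -- recurrence
    set g : ℕ → ℝ := fun j =>
      (if j = 0 then 0 else L n (j - 1)) +
        (if j ≤ n then (α j + j * m + (α n + n * m)) * L n j else 0) with hg
    have key : ∑ j ∈ Finset.range (n + 2), C (L (n + 1) j) * ∏ i ∈ Finset.range j, (X - C (α i + i * m))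
        = ∑ j ∈ Finset.range (n + 2), C (g j) * ∏ i ∈ Finset.range j, (X - C (α i + i * m)) := by
      have lhs : ∑ j ∈ Finset.range (n + 2), C (L (n + 1) j) * ∏ i ∈ Finset.range j, (X - C (α i + i * m))
          = (∑ j ∈ Finset.range (n + 1), C (L n j) * ∏ i ∈ Finset.range j, (X - C (α i + i * m)))
              * (X + C (α n + n * m)) := by
        rw [← hL (n + 1), ← hL n, Finset.prod_range_succ]
      rw [lhs, Finset.sum_mul]
      have step : ∀ j : ℕ,
          (C (L n j) * ∏ i ∈ Finset.range j, (X - C (α i + i * m))) * (X + C (α n + n * m))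
          = C (L n j) * ∏ i ∈ Finset.range (j + 1), (X - C (α i + i * m))
            + C ((α j + j * m + (α n + n * m)) * L n j) * ∏ i ∈ Finset.range j, (X - C (α i + i * m)) := by
        intro j
        rw [Finset.prod_range_succ]
        simp only [C_add, C_mul]
        ring
      rw [Finset.sum_congr rfl fun j _ => step j, Finset.sum_add_distrib]
      have e1 : ∑ j ∈ Finset.range (n + 1), C (L n j) * ∏ i ∈ Finset.range (j + 1), (X - C (α i + i * m))
          = ∑ j ∈ Finset.range (n + 2),
              (if j = 0 then 0 else C (L n (j - 1)) * ∏ i ∈ Finset.range j, (X - C (α i + i * m))) := by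
        rw [Finset.sum_range_succ'
          (fun j => if j = 0 then 0 else C (L n (j - 1)) * ∏ i ∈ Finset.range j, (X - C (α i + i * m)))]
        simp
      have e2 : ∑ j ∈ Finset.range (n + 1),
            C ((α j + j * m + (α n + n * m)) * L n j) * ∏ i ∈ Finset.range j, (X - C (α i + i * m))
          = ∑ j ∈ Finset.range (n + 2),
              (if j ≤ n then C ((α j + j * m + (α n + n * m)) * L n j) * ∏ i ∈ Finset.range j, (X - C (α i + i * m)) else 0) := by
        conv_rhs => rw [Finset.sum_range_succ]
        rw [if_neg (by omega : ¬ n + 1 ≤ n), add_zero]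
        exact Finset.sum_congr rfl fun j hj =>
          (if_pos (Nat.lt_succ_iff.mp (Finset.mem_range.mp hj))).symm
      rw [e1, e2, ← Finset.sum_add_distrib]
      refine Finset.sum_congr rfl fun j _ => ?_
      simp only [hg, C_add]
      split_ifs <;> simp [C_mul] <;> ring
    have hz : ∑ j ∈ Finset.range (n + 2),
        C ((fun j => L (n + 1) j - g j) j) * ∏ i ∈ Finset.range j, (X - C (α i + i * m)) = 0 := by
      simp only [C_sub, sub_mul, Finset.sum_sub_distrib]
      rw [key, sub_self]
    have h0 := uniq_aux (fun i => α i + i * m) (n + 2) (fun j => L (n + 1) j - g j) hz k (by omega)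
    have h2 : L (n + 1) k - g k = 0 := h0
    have hLg : L (n + 1) k = g k := by linarith
    rw [hLg, hg]
    simp only [if_neg (by omega : ¬ k = 0), if_pos hkn]
    push_cast
    ring
  · -- evaluation at α 0
    have := congrArg (Polynomial.eval (α 0)) (hL n)
    simp only [Polynomial.eval_prod, Polynomial.eval_add, Polynomial.eval_X, Polynomial.eval_C,
      Polynomial.eval_finset_sum, Polynomial.eval_mul, Polynomial.eval_sub] at this
    rw [Finset.sum_range_succ' (fun k => L n k * ∏ j ∈ Finset.range k, (α 0 - (α j + j * m)))] at this
    have hzero : ∀ j ∈ Finset.range n,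
        L n (j + 1) * ∏ i ∈ Finset.range (j + 1), (α 0 - (α i + i * m)) = 0 := by
      intro j _
      rw [Finset.prod_eq_zero (Finset.mem_range.mpr (Nat.succ_pos j))]
      · ring
      · push_cast; ring
    rw [Finset.sum_eq_zero hzero] at this
    simp only [Finset.range_zero, Finset.prod_empty, mul_one, zero_add] at this
    rw [← this]
    exact Finset.prod_congr rfl fun i _ => by ring
end

section
/- Assume the values α_j + j·m (0 ≤ j ≤ k) are pairwise distinct. Then for 0 ≤ k ≤ n, L_{m,ᾱ}(n,k) = Σ_{j=0}^k ∏_{i=0}^{n−1}(α_j + jm + α_i + im) / ∏_{i=0, i≠j}^k (α_j + jm − α_i − im). -/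
open Polynomial Finset

lemma coeff_interpolate_top {F : Type*} [Field F] {ι : Type*} [DecidableEq ι]
    (s : Finset ι) (v : ι → F) (r : ι → F) :
    (Lagrange.interpolate s v r).coeff (s.card - 1)
      = ∑ i ∈ s, r i * Lagrange.nodalWeight s v i := by
  rw [Lagrange.interpolate_apply, finset_sum_coeff]
  refine sum_congr rfl fun i hi => ?_
  rw [Lagrange.basis_eq_prod_sub_inv_mul_nodal_div hi, ← Lagrange.nodal_erase_eq_nodal_div hi,
    ← mul_assoc, ← C_mul, coeff_C_mul]
  have h1 : (Lagrange.nodal (s.erase i) v).natDegree = s.card - 1 := by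
    rw [Lagrange.natDegree_nodal, card_erase_of_mem hi]
  rw [show s.card - 1 = (Lagrange.nodal (s.erase i) v).natDegree from h1.symm,
    Lagrange.nodal_monic.coeff_natDegree, mul_one]

theorem stmt15 (m : ℝ) (α : ℕ → ℝ)
    (L : ℕ → ℕ → ℝ)
    (hL : ∀ n : ℕ, ∏ i ∈ Finset.range n, (Polynomial.X + Polynomial.C (α i + i * m))
      = ∑ k ∈ Finset.range (n + 1), Polynomial.C (L n k) * ∏ j ∈ Finset.range k, (Polynomial.X - Polynomial.C (α j + j * m)))
    (n k : ℕ) (hkn : k ≤ n)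
    (hdist : ∀ i ≤ k, ∀ j ≤ k, i ≠ j → α i + i * m ≠ α j + j * m) :
    L n k = ∑ j ∈ Finset.range (k + 1),
      (∏ i ∈ Finset.range n, (α j + j * m + α i + i * m)) /
        ∏ i ∈ (Finset.range (k + 1)).erase j, (α j + j * m - α i - i * m) := by
  set v : ℕ → ℝ := fun j => α j + j * m with hv
  set s : Finset ℕ := Finset.range (k + 1) with hs
  have hcard : s.card = k + 1 := by simp [hs]
  have hinj : Set.InjOn v s := by
    intro i hi j hj hij
    by_contra hne
    exact hdist i (Nat.lt_succ_iff.mp (by simpa [hs] using hi)) j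
      (Nat.lt_succ_iff.mp (by simpa [hs] using hj)) hne hij
  -- the divided-difference functional
  set S : ℝ[X] → ℝ := fun p => ∑ j ∈ s, p.eval (v j) * Lagrange.nodalWeight s v j with hS
  have key : ∀ p : ℝ[X], p.degree < (k + 1 : ℕ) → S p = p.coeff k := by
    intro p hp
    have hpi : p = Lagrange.interpolate s v fun i => p.eval (v i) :=
      Lagrange.eq_interpolate hinj (by rw [hcard]; exact_mod_cast hp)
    have := coeff_interpolate_top s v (fun i => p.eval (v i))
    rw [← hpi, hcard] at this
    simpa [hS] using this.symm
  -- S of the Newton basis polynomials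
  have hN : ∀ k' ∈ Finset.range (n + 1),
      S (∏ j ∈ Finset.range k', (X - C (v j))) = if k' = k then 1 else 0 := by
    intro k' _
    have hnodal : (∏ j ∈ Finset.range k', (X - C (v j))) = Lagrange.nodal (Finset.range k') v :=
      rfl
    rcases le_or_gt k' k with h | h
    · rw [key _ (by rw [hnodal, Lagrange.degree_nodal, card_range]; exact_mod_cast
        Nat.lt_succ_of_le h)]
      rcases eq_or_lt_of_le h with rfl | h'
      · have h1 := (Lagrange.nodal_monic (s := Finset.range k') (v := v)).coeff_natDegree
        rw [Lagrange.natDegree_nodal, card_range] at h1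
        rw [if_pos rfl, hnodal, h1]
      · rw [if_neg h'.ne, hnodal, coeff_eq_zero_of_natDegree_lt]
        rw [Lagrange.natDegree_nodal, card_range]; exact h'
    · rw [if_neg h.ne']
      refine Finset.sum_eq_zero fun j hj => ?_
      have hjk' : j ∈ Finset.range k' := by
        rw [mem_range]; exact lt_of_lt_of_le (by simpa [hs] using hj) h
      rw [hnodal, Lagrange.eval_nodal_at_node hjk', zero_mul]
  -- apply S to both sides of the defining identity
  have hmain : S (∏ i ∈ Finset.range n, (X + C (v i)))
      = S (∑ k' ∈ Finset.range (n + 1), C (L n k') * ∏ j ∈ Finset.range k', (X - C (v j))) := by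
    rw [hL n]
  -- compute the right side
  have hR : S (∑ k' ∈ Finset.range (n + 1), C (L n k') * ∏ j ∈ Finset.range k', (X - C (v j)))
      = L n k := by
    simp only [hS, eval_finset_sum, eval_mul, eval_C, Finset.sum_mul]
    rw [Finset.sum_comm]
    have : ∀ k' ∈ Finset.range (n + 1),
        ∑ j ∈ s, L n k' * eval (v j) (∏ j ∈ Finset.range k', (X - C (v j)))
            * Lagrange.nodalWeight s v j
          = L n k' * S (∏ j ∈ Finset.range k', (X - C (v j))) := by
      intro k' _
      rw [hS, Finset.mul_sum]
      exact Finset.sum_congr rfl fun j _ => by ring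
    rw [Finset.sum_congr rfl this, Finset.sum_congr rfl (fun k' hk' => by rw [hN k' hk'])]
    simp only [mul_ite, mul_one, mul_zero]
    rw [Finset.sum_ite_eq' (Finset.range (n + 1)) k (fun k' => L n k')]
    simp [Nat.lt_succ_of_le hkn]
  -- compute the left side
  have hLft : S (∏ i ∈ Finset.range n, (X + C (v i)))
      = ∑ j ∈ s, (∏ i ∈ Finset.range n, (v j + v i)) / ∏ i ∈ s.erase j, (v j - v i) := by
    simp only [hS]
    refine Finset.sum_congr rfl fun j _ => ?_
    rw [eval_prod]
    simp only [eval_add, eval_X, eval_C]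
    rw [Lagrange.nodalWeight, div_eq_mul_inv, ← Finset.prod_inv_distrib]
  rw [← hR, ← hmain, hLft]
  refine Finset.sum_congr rfl fun j _ => ?_
  congr 1
  · exact Finset.prod_congr rfl fun i _ => by rw [hv]; ring
  · exact Finset.prod_congr rfl fun i _ => by rw [hv]; ring
end

section
/- For n ≥ k ≥ 1, L_{m,ᾱ}(n,k) = Σ_{j=k}^n L_{m,ᾱ}(j−1,k−1) ∏_{i=j}^{n−1}(α_i + i·m + α_k + k·m). -/
open Polynomial Finset

private lemma aux_monic (p : ℕ → ℝ) (k : ℕ) :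
    (∏ j ∈ Finset.range k, (X - C (p j))).Monic :=
  monic_prod_of_monic _ _ (fun j _ => monic_X_sub_C _)

private lemma aux_deg (p : ℕ → ℝ) (k : ℕ) :
    (∏ j ∈ Finset.range k, (X - C (p j))).natDegree = k := by
  rw [natDegree_prod_of_monic _ _ (fun j _ => monic_X_sub_C _)]
  simp

private lemma aux_indep (p : ℕ → ℝ) :
    ∀ (N : ℕ) (c : ℕ → ℝ),
      (∑ k ∈ Finset.range N, C (c k) * ∏ j ∈ Finset.range k, (X - C (p j))) = 0 →
      ∀ k < N, c k = 0 := by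
  intro N
  induction N with
  | zero => simp
  | succ N ih =>
    intro c hc k hk
    have hN : c N = 0 := by
      have h0 := congrArg (fun q : ℝ[X] => q.coeff N) hc
      simp only [finset_sum_coeff, coeff_C_mul, coeff_zero] at h0
      rw [Finset.sum_range_succ] at h0
      have h1 : ∀ j ∈ Finset.range N,
          c j * (∏ i ∈ Finset.range j, (X - C (p i))).coeff N = 0 := by
        intro j hj
        rw [coeff_eq_zero_of_natDegree_lt, mul_zero]
        rw [aux_deg]
        exact Finset.mem_range.mp hj
      rw [Finset.sum_eq_zero h1, zero_add] at h0
      have h2 : (∏ i ∈ Finset.range N, (X - C (p i))).coeff N = 1 := by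
        have := (aux_monic p N).leadingCoeff
        rwa [leadingCoeff, aux_deg] at this
      rw [h2, mul_one] at h0
      exact h0
    have hc' : (∑ k ∈ Finset.range N, C (c k) * ∏ j ∈ Finset.range k, (X - C (p j))) = 0 := by
      rw [Finset.sum_range_succ, hN] at hc
      simpa using hc
    rcases Nat.lt_succ_iff_lt_or_eq.mp hk with h | h
    · exact ih c hc' k h
    · rw [h]; exact hN

private lemma aux_rec (m : ℝ) (α : ℕ → ℝ) (L : ℕ → ℕ → ℝ)
    (hL : ∀ n : ℕ, ∏ i ∈ Finset.range n, (X + C (α i + i * m))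
      = ∑ k ∈ Finset.range (n + 1), C (L n k) * ∏ j ∈ Finset.range k, (X - C (α j + j * m)))
    (n k : ℕ) (hk1 : 1 ≤ k) (hkn : k ≤ n + 1) :
    L (n + 1) k = (if k ≤ n then (α k + k * m + (α n + n * m)) * L n k else 0)
      + L n (k - 1) := by
  set p : ℕ → ℝ := fun i => α i + i * m with hp
  set b : ℕ → ℝ[X] := fun k => ∏ j ∈ Finset.range k, (X - C (p j)) with hb
  set e : ℕ → ℝ := fun k =>
    (if k ≤ n then (p k + p n) * L n k else 0) + (if 1 ≤ k then L n (k - 1) else 0) with he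
  have key : (∑ j ∈ Finset.range (n + 2), C (e j) * b j)
      = ∑ j ∈ Finset.range (n + 2), C (L (n + 1) j) * b j := by
    have expand : (∑ j ∈ Finset.range (n + 2), C (e j) * b j)
        = (∑ j ∈ Finset.range (n + 1), C (L n j) * b j) * (X + C (p n)) := by
      have split : ∀ j, C (e j) * b j
          = C (if j ≤ n then (p j + p n) * L n j else 0) * b j
            + C (if 1 ≤ j then L n (j - 1) else 0) * b j := by
        intro j
        rw [he]
        simp [C_add, add_mul]
      rw [Finset.sum_congr rfl (fun j _ => split j), Finset.sum_add_distrib]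
      have sum1 : (∑ j ∈ Finset.range (n + 2),
            C (if j ≤ n then (p j + p n) * L n j else 0) * b j)
          = ∑ j ∈ Finset.range (n + 1), C ((p j + p n) * L n j) * b j := by
        rw [Finset.sum_range_succ]
        simp only [Nat.lt_irrefl, if_neg (Nat.not_succ_le_self n)]
        rw [map_zero, zero_mul, add_zero]
        refine Finset.sum_congr rfl (fun j hj => ?_)
        rw [if_pos (Nat.lt_succ_iff.mp (Finset.mem_range.mp hj))]
      have sum2 : (∑ j ∈ Finset.range (n + 2),
            C (if 1 ≤ j then L n (j - 1) else 0) * b j)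
          = ∑ j ∈ Finset.range (n + 1), C (L n j) * b (j + 1) := by
        rw [Finset.sum_range_succ']
        simp
      rw [sum1, sum2]
      have bstep : ∀ j, b (j + 1) = b j * (X - C (p j)) := by
        intro j; rw [hb]; exact Finset.prod_range_succ _ _
      rw [Finset.sum_mul, ← Finset.sum_add_distrib]
      refine Finset.sum_congr rfl (fun j hj => ?_)
      rw [bstep]
      simp only [hp, map_add, map_mul]
      ring
    rw [expand, ← hL n]
    have : (∏ i ∈ Finset.range n, (X + C (p i))) * (X + C (p n))
        = ∏ i ∈ Finset.range (n + 1), (X + C (p i)) := (Finset.prod_range_succ _ _).symm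
    rw [this, hL (n + 1)]
  have hzero : (∑ j ∈ Finset.range (n + 2),
      C (L (n + 1) j - e j) * b j) = 0 := by
    have : ∀ j, C (L (n + 1) j - e j) * b j
        = C (L (n + 1) j) * b j - C (e j) * b j := by
      intro j; rw [map_sub, sub_mul]
    rw [Finset.sum_congr rfl (fun j _ => this j), Finset.sum_sub_distrib, key, sub_self]
  have h0 : L (n + 1) k - e k = 0 :=
    aux_indep p (n + 2) (fun j => L (n + 1) j - e j) hzero k (by omega)
  have hk' : L (n + 1) k = e k := by linarith
  rw [hk', he]
  simp [hp, if_pos hk1]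

theorem stmt16 (m : ℝ) (α : ℕ → ℝ)
    (L : ℕ → ℕ → ℝ)
    (hL : ∀ n : ℕ, ∏ i ∈ Finset.range n, (Polynomial.X + Polynomial.C (α i + i * m))
      = ∑ k ∈ Finset.range (n + 1), Polynomial.C (L n k) * ∏ j ∈ Finset.range k, (Polynomial.X - Polynomial.C (α j + j * m)))
    (n k : ℕ) (hk1 : 1 ≤ k) (hkn : k ≤ n) :
    L n k = ∑ j ∈ Finset.Icc k n, L (j - 1) (k - 1) *
      ∏ i ∈ Finset.Ico j n, (α i + i * m + α k + k * m) := by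
  induction n, hkn using Nat.le_induction with
  | base =>
    obtain ⟨k', rfl⟩ : ∃ k', k = k' + 1 := ⟨k - 1, by omega⟩
    have h := aux_rec m α L hL k' (k' + 1) hk1 (le_refl _)
    rw [if_neg (by omega)] at h
    simp only [Nat.add_sub_cancel] at h
    rw [h, zero_add]
    rw [Finset.Icc_self, Finset.sum_singleton, Finset.Ico_self, Finset.prod_empty,
      mul_one, Nat.add_sub_cancel]
  | succ n hn ih =>
    have h := aux_rec m α L hL n k hk1 (by omega)
    rw [if_pos hn] at h
    have hRHS : (∑ j ∈ Finset.Icc k (n + 1), L (j - 1) (k - 1) *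
          ∏ i ∈ Finset.Ico j (n + 1), (α i + i * m + α k + k * m))
        = (α n + n * m + α k + k * m) * (∑ j ∈ Finset.Icc k n, L (j - 1) (k - 1) *
            ∏ i ∈ Finset.Ico j n, (α i + i * m + α k + k * m)) + L n (k - 1) := by
      rw [Finset.sum_Icc_succ_top (by omega), Finset.Ico_self, Finset.prod_empty,
        mul_one, Nat.add_sub_cancel, Finset.mul_sum]
      congr 1
      refine Finset.sum_congr rfl fun j hj => ?_
      rw [Finset.prod_Ico_succ_top (Finset.mem_Icc.mp hj).2]
      ring
    rw [hRHS, h, ih]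
    ring
end

section
/- For m ≠ 0 and 0 ≤ k ≤ n, the r-Whitney-Lah numbers satisfy L_{m,r}(n,k) = (1/(m^k k!)) Σ_{j=0}^k C(k,j)(−1)^{k−j} ∏_{i=0}^{n−1}(2r + jm + im). -/
/-!
Evaluating the defining identity at the nodes `x = r + j m` makes the right-hand side
`∑ᵢ L(n,i) mⁱ j⁽ⁱ⁾`, a polynomial in `j` written in the falling-factorial basis. The `k`-th forward
difference at `0`, `∑ⱼ C(k,j) (-1)^(k-j) (·)(j)`, annihilates `j⁽ⁱ⁾` for `i ≠ k` and sends `j⁽ᵏ⁾`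
to `k!`, so it extracts `k! mᵏ L(n,k)`.
-/

open Polynomial Finset

section FallingFactorial

variable {R : Type*} [CommRing R]

theorem prod_range_add_mul_sub_add_mul (a m : R) (j k : ℕ) :
    ∏ t ∈ range k, (a + j * m - (a + t * m)) = m ^ k * j.descFactorial k := by
  rw [← descPochhammer_eval_eq_descFactorial, descPochhammer_eval_eq_prod_range,
    pow_eq_prod_const, ← prod_mul_distrib]
  exact prod_congr rfl fun t _ ↦ by ring

theorem sum_range_choose_mul_neg_one_pow_mul_descFactorial (k i : ℕ) :
    ∑ j ∈ range (k + 1), (k.choose j : R) * (-1) ^ (k - j) * j.descFactorial i =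
      if k = i then (k.factorial : R) else 0 := by
  have h := congrArg (Int.cast : ℤ → R) (fwdDiff_iter_choose_zero i k)
  simp only [fwdDiff_iter_eq_sum_shift, smul_eq_mul, mul_one, zero_add,
    Int.cast_sum, Int.cast_mul, Int.cast_pow, Int.cast_neg, Int.cast_one, Int.cast_natCast,
    Int.cast_ite, Int.cast_zero] at h
  calc _ = (i.factorial : R) *
        ∑ j ∈ range (k + 1), (-1) ^ (k - j) * (k.choose j : R) * (j.choose i : R) := by
        rw [mul_sum]
        refine sum_congr rfl fun j _ ↦ ?_
        rw [Nat.descFactorial_eq_factorial_mul_choose]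
        push_cast
        ring
    _ = _ := by
        rw [h]
        split_ifs with hki <;> simp [hki]

theorem sum_range_choose_mul_neg_one_pow_mul_sum_descFactorial (c : ℕ → R) {k N : ℕ}
    (hk : k ≤ N) :
    ∑ j ∈ range (k + 1), (k.choose j : R) * (-1) ^ (k - j) *
        ∑ i ∈ range (N + 1), c i * j.descFactorial i = k.factorial * c k := by
  have hterm (i : ℕ) : ∑ j ∈ range (k + 1), (k.choose j : R) * (-1) ^ (k - j) *
      (c i * j.descFactorial i) = c i * if k = i then (k.factorial : R) else 0 := by
    rw [← sum_range_choose_mul_neg_one_pow_mul_descFactorial, mul_sum]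
    exact sum_congr rfl fun _ _ ↦ by ring
  simp_rw [mul_sum]
  rw [sum_comm]
  simp_rw [hterm, mul_ite, mul_zero, sum_ite_eq, mem_range]
  rw [if_pos (by omega), mul_comm]

end FallingFactorial

theorem stmt17 (m r : ℝ) (hm : m ≠ 0)
    (L : ℕ → ℕ → ℝ)
    (hL : ∀ n : ℕ, ∏ i ∈ Finset.range n, (Polynomial.X + Polynomial.C (r + i * m))
      = ∑ k ∈ Finset.range (n + 1), Polynomial.C (L n k) * ∏ j ∈ Finset.range k, (Polynomial.X - Polynomial.C (r + j * m)))
    (n k : ℕ) (hkn : k ≤ n) :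
    L n k = (1 / (m ^ k * (Nat.factorial k : ℝ))) *
      ∑ j ∈ Finset.range (k + 1), (Nat.choose k j : ℝ) * (-1) ^ (k - j) *
        ∏ i ∈ Finset.range n, (2 * r + j * m + i * m) := by
  have heval (j : ℕ) : ∏ i ∈ range n, (2 * r + j * m + i * m) =
      ∑ i ∈ range (n + 1), L n i * m ^ i * j.descFactorial i := by
    have h := congrArg (eval (r + j * m)) (hL n)
    simp only [eval_prod, eval_finsetSum, eval_mul, eval_C, eval_add, eval_sub, eval_X,
      prod_range_add_mul_sub_add_mul, ← mul_assoc] at h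
    rw [← h]
    exact prod_congr rfl fun i _ ↦ by ring
  simp_rw [heval, sum_range_choose_mul_neg_one_pow_mul_sum_descFactorial _ hkn]
  field_simp
end

section
/- For m ≠ 0 real, r real, and 0 ≤ k ≤ n, the combinatorial identity (1/(m^k k!)) Σ_{j=0}^k C(k,j)(−1)^{k−j} ∏_{i=0}^{n−1}(2r + jm + im) = C(n,k) ∏_{i=0}^{n−k−1}(2r + km + im) holds. -/
open Finset fwdDiff

lemma prod_shift_diff (y m : ℝ) (s : ℕ) (hs : 1 ≤ s) :
    (∏ i ∈ range s, (y + m + i * m)) - ∏ i ∈ range s, (y + i * m)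
      = s * m * ∏ i ∈ range (s - 1), (y + m + i * m) := by
  obtain ⟨t, rfl⟩ := Nat.exists_eq_add_of_le hs
  have h1 : (∏ i ∈ range (1 + t), (y + m + i * m))
      = (∏ i ∈ range t, (y + m + i * m)) * (y + m + t * m) := by
    rw [add_comm 1 t, prod_range_succ]
  have h2 : (∏ i ∈ range (1 + t), (y + i * m))
      = (y + (0:ℕ) * m) * ∏ i ∈ range t, (y + (i + 1 : ℕ) * m) := by
    rw [add_comm 1 t, prod_range_succ', mul_comm]
  have h3 : ∀ i : ℕ, (y + ((i:ℝ) + 1) * m) = y + m + i * m := by intro i; ring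
  rw [h1, h2]
  simp only [Nat.cast_add, Nat.cast_one, h3, Nat.cast_zero]
  have : (1 + t - 1) = t := by omega
  rw [this]
  ring

lemma key_diff (m r : ℝ) (n : ℕ) : ∀ k : ℕ, k ≤ n → ∀ t : ℝ,
    (fwdDiff (1:ℝ))^[k] (fun t : ℝ => ∏ i ∈ range n, (2*r + t*m + i*m)) t
      = (n.descFactorial k : ℝ) * m ^ k * ∏ i ∈ range (n - k), (2*r + (t + k)*m + i*m) := by
  intro k
  induction k with
  | zero => intro _ t; simp
  | succ k ih =>
    intro hk t
    have hk' : k ≤ n := by omega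
    rw [Function.iterate_succ_apply', fwdDiff, ih hk', ih hk']
    have hs : 1 ≤ n - k := by omega
    have := prod_shift_diff (2*r + (t + k)*m) m (n - k) hs
    have e1 : ∀ i : ℕ, (2*r + (t + 1 + k)*m + i*m) = (2*r + (t + k)*m) + m + i*m := by
      intro i; ring
    have e2 : ∀ i : ℕ, (2*r + (t + k)*m + i*m) = (2*r + (t + k)*m) + i*m := by
      intro i; ring
    have e3 : ∀ i : ℕ, (2*r + (t + (k+1:ℕ))*m + i*m) = (2*r + (t + k)*m) + m + i*m := by
      intro i; push_cast; ring
    simp only [e1, e2, e3]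
    rw [← mul_sub, this]
    have hd : (n.descFactorial (k+1) : ℝ) = (n - k : ℕ) * n.descFactorial k := by
      rw [Nat.descFactorial_succ]; push_cast; ring
    have hnk : (n - (k+1)) = (n - k) - 1 := by omega
    rw [hd, hnk]
    have : ((n - k : ℕ) : ℝ) = (n : ℝ) - k := by
      push_cast [Nat.cast_sub hk']; ring
    ring

theorem stmt18 (m r : ℝ) (hm : m ≠ 0) (n k : ℕ) (hkn : k ≤ n) :
    (1 / (m ^ k * (Nat.factorial k : ℝ))) *
      ∑ j ∈ Finset.range (k + 1), (Nat.choose k j : ℝ) * (-1) ^ (k - j) *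
        ∏ i ∈ Finset.range n, (2 * r + j * m + i * m)
    = (Nat.choose n k : ℝ) * ∏ i ∈ Finset.range (n - k), (2 * r + k * m + i * m) := by
  have hsum := fwdDiff_iter_eq_sum_shift (1:ℝ) (fun t : ℝ => ∏ i ∈ range n, (2*r + t*m + i*m)) k 0
  have hkey := key_diff m r n k hkn 0
  rw [hkey] at hsum
  have : ∑ j ∈ Finset.range (k + 1), (Nat.choose k j : ℝ) * (-1) ^ (k - j) *
        ∏ i ∈ Finset.range n, (2 * r + j * m + i * m)
      = (n.descFactorial k : ℝ) * m ^ k * ∏ i ∈ range (n - k), (2*r + (0 + k)*m + i*m) := by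
    rw [hsum]
    apply Finset.sum_congr rfl
    intro j _
    simp only [zsmul_eq_mul, Int.cast_mul, Int.cast_pow, Int.cast_neg, Int.cast_one,
      Int.cast_natCast, nsmul_eq_mul, mul_one, zero_add]
    ring
  rw [this]
  have hd : (n.descFactorial k : ℝ) = (Nat.factorial k : ℝ) * n.choose k := by
    rw [Nat.descFactorial_eq_factorial_mul_choose]; push_cast; ring
  have hfac : (Nat.factorial k : ℝ) ≠ 0 := Nat.cast_ne_zero.2 k.factorial_ne_zero
  have hmk : (m:ℝ) ^ k ≠ 0 := pow_ne_zero _ hm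
  rw [hd]
  have : ∀ i : ℕ, (2*r + ((0:ℝ) + k)*m + i*m) = 2*r + k*m + i*m := by intro i; ring
  simp only [this]
  field_simp
end

section
/- For the r-Whitney-Lah numbers, L_{m,r}(n,k) = C(n,k) ∏_{i=0}^{n−k−1}(2r + km + im) for all 0 ≤ k ≤ n. -/
open Polynomial Finset

noncomputable def Rwl (m r : ℝ) (n k : ℕ) : ℝ :=
  (Nat.choose n k : ℝ) * ∏ i ∈ Finset.range (n - k), (2 * r + k * m + i * m)

lemma Rwl_zero_of_lt (m r : ℝ) {n k : ℕ} (h : n < k) : Rwl m r n k = 0 := by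
  simp [Rwl, Nat.choose_eq_zero_of_lt h]

lemma scalarRec0 (m r : ℝ) (n : ℕ) :
    Rwl m r (n+1) 0 = Rwl m r n 0 * (2*r + (0:ℕ)*m + n*m) := by
  simp only [Rwl, Nat.choose_self, Nat.choose_zero_right, Nat.sub_zero, Nat.cast_one,
    Finset.prod_range_succ]
  push_cast
  ring

lemma scalarRec (m r : ℝ) (n k : ℕ) :
    Rwl m r (n+1) (k+1) = Rwl m r n k + Rwl m r n (k+1) * (2*r + (k+1:ℕ)*m + n*m) := by
  rcases lt_trichotomy n k with h | rfl | h
  · rw [Rwl_zero_of_lt m r (show n < k + 1 by omega),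
      Rwl_zero_of_lt m r (show n < k by omega), Rwl_zero_of_lt m r (show n + 1 < k + 1 by omega)]
    ring
  · have h1 : Rwl m r n (n+1) = 0 := Rwl_zero_of_lt m r (by omega)
    rw [h1]
    simp [Rwl]
  · have hk1 : k + 1 ≤ n := h
    have hnk : n - k = (n - k - 1) + 1 := by omega
    have ep2 : ∏ i ∈ Finset.range (n-k-1), (2*r+(k:ℝ)*m+((i+1:ℕ):ℝ)*m)
        = ∏ i ∈ Finset.range (n - k - 1), (2 * r + ((k:ℝ)+1) * m + i * m) :=
      Finset.prod_congr rfl (fun i _ => by push_cast; ring)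
    have e2 : ∏ i ∈ Finset.range (n - k), (2 * r + (k:ℝ) * m + i * m)
        = (2*r + k*m) * ∏ i ∈ Finset.range (n - k - 1), (2 * r + ((k:ℝ)+1) * m + i * m) := by
      rw [hnk, Finset.prod_range_succ', ep2]
      norm_num
      ring
    have hc : ((n - k - 1 : ℕ) : ℝ) = (n:ℝ) - k - 1 := by
      have : (n - k - 1 : ℕ) = n - (k+1) := by omega
      rw [this, Nat.cast_sub hk1]; push_cast; ring
    have ep1 : ∏ i ∈ Finset.range (n-k-1), (2*r+((k+1:ℕ):ℝ)*m+(i:ℝ)*m)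
        = ∏ i ∈ Finset.range (n - k - 1), (2 * r + ((k:ℝ)+1) * m + i * m) :=
      Finset.prod_congr rfl (fun i _ => by push_cast; ring)
    have e1 : ∏ i ∈ Finset.range ((n+1) - (k+1)), (2 * r + ((k+1:ℕ):ℝ) * m + i * m)
        = (∏ i ∈ Finset.range (n - k - 1), (2 * r + ((k:ℝ)+1) * m + i * m)) * (2*r + n*m) := by
      have hnn : (n+1) - (k+1) = (n - k - 1) + 1 := by omega
      rw [hnn, Finset.prod_range_succ, ep1, hc]
      congr 1
      push_cast
      ring
    have e3 : n - (k+1) = n - k - 1 := by omega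
    have c1 : ((Nat.choose (n+1) (k+1) : ℕ) : ℝ) = (Nat.choose n k : ℝ) + (Nat.choose n (k+1) : ℝ) := by
      rw [Nat.choose_succ_succ]; push_cast; ring
    have c2 : (Nat.choose n (k+1) : ℝ) * ((k:ℝ)+1) = (Nat.choose n k : ℝ) * ((n:ℝ) - k) := by
      have h2 : ((Nat.choose n (k+1) * (k+1) : ℕ) : ℝ) = ((Nat.choose n k * (n - k) : ℕ) : ℝ) :=
        congrArg _ (Nat.choose_succ_right_eq n k)
      push_cast [Nat.cast_sub (le_of_lt h)] at h2
      linarith [h2]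
    simp only [Rwl, e3]
    rw [e1, e2]
    push_cast
    push_cast at c1 c2
    set P := ∏ i ∈ Finset.range (n - k - 1), (2 * r + ((k:ℝ)+1) * m + i * m) with hP
    linear_combination (P*(2*r+(n:ℝ)*m))*c1 - m*P*c2

lemma hRlem (m r : ℝ) (n : ℕ) :
    ∏ i ∈ Finset.range n, (Polynomial.X + Polynomial.C (r + i * m))
      = ∑ k ∈ Finset.range (n + 1), Polynomial.C (Rwl m r n k)
          * ∏ j ∈ Finset.range k, (Polynomial.X - Polynomial.C (r + j * m)) := by
  induction n with
  | zero => simp [Rwl]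
  | succ n ih =>
    rw [Finset.prod_range_succ, ih, Finset.sum_mul]
    have hsplit : ∀ k ∈ Finset.range (n+1),
        (Polynomial.C (Rwl m r n k) * ∏ j ∈ Finset.range k, (Polynomial.X - Polynomial.C (r + (j:ℝ) * m))) * (Polynomial.X + Polynomial.C (r + (n:ℝ) * m))
        = Polynomial.C (Rwl m r n k) * ∏ j ∈ Finset.range (k+1), (Polynomial.X - Polynomial.C (r + (j:ℝ) * m))
          + Polynomial.C (Rwl m r n k * (2*r + (k:ℝ)*m + (n:ℝ)*m)) * ∏ j ∈ Finset.range k, (Polynomial.X - Polynomial.C (r + (j:ℝ) * m)) := by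
      intro k _
      rw [Finset.prod_range_succ, Polynomial.C_mul]
      have hx : (Polynomial.C (2*r + (k:ℝ)*m + (n:ℝ)*m) : ℝ[X])
          = Polynomial.C (r + (k:ℝ)*m) + Polynomial.C (r + (n:ℝ)*m) := by
        rw [← Polynomial.C_add]; ring_nf
      rw [hx]; ring
    rw [Finset.sum_congr rfl hsplit, Finset.sum_add_distrib]
    have hB : (∑ k ∈ Finset.range (n+1+1), Polynomial.C (Rwl m r n k * (2*r + (k:ℝ)*m + (n:ℝ)*m)) * ∏ j ∈ Finset.range k, (Polynomial.X - Polynomial.C (r + (j:ℝ) * m)))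
        = ∑ k ∈ Finset.range (n+1), Polynomial.C (Rwl m r n k * (2*r + (k:ℝ)*m + (n:ℝ)*m)) * ∏ j ∈ Finset.range k, (Polynomial.X - Polynomial.C (r + (j:ℝ) * m)) := by
      rw [Finset.sum_range_succ, Rwl_zero_of_lt m r (by omega : n < n+1)]
      simp
    rw [← hB]
    rw [Finset.sum_range_succ' (fun k => Polynomial.C (Rwl m r n k * (2*r + (k:ℝ)*m + (n:ℝ)*m)) * ∏ j ∈ Finset.range k, (Polynomial.X - Polynomial.C (r + (j:ℝ) * m))) (n+1)]
    rw [Finset.sum_range_succ' (fun k => Polynomial.C (Rwl m r (n+1) k) * ∏ j ∈ Finset.range k, (Polynomial.X - Polynomial.C (r + (j:ℝ) * m))) (n+1)]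
    simp only [scalarRec, scalarRec0, Polynomial.C_add, Polynomial.C_mul, add_mul]
    rw [Finset.sum_add_distrib]
    ring

lemma indep (a : ℕ → ℝ) : ∀ (N : ℕ) (c : ℕ → ℝ),
    (∑ k ∈ Finset.range N, Polynomial.C (c k) * ∏ j ∈ Finset.range k, (Polynomial.X - Polynomial.C (a j))) = 0 →
    ∀ k < N, c k = 0 := by
  intro N
  induction N with
  | zero => intro c h k hk; omega
  | succ N ih =>
    intro c h k hk
    have hdeg : ∀ t : ℕ, (∏ j ∈ Finset.range t, (Polynomial.X - Polynomial.C (a j))).natDegree = t := by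
      intro t
      rw [Polynomial.natDegree_prod_of_monic _ _ (fun j _ => Polynomial.monic_X_sub_C (a j))]
      simp
    have hcN : c N = 0 := by
      have h2 := congrArg (fun p => Polynomial.coeff p N) h
      simp only [Finset.sum_range_succ, Polynomial.coeff_add, Polynomial.coeff_zero] at h2
      rw [Polynomial.finset_sum_coeff] at h2
      have hz : ∀ t ∈ Finset.range N,
          (Polynomial.C (c t) * ∏ j ∈ Finset.range t, (Polynomial.X - Polynomial.C (a j))).coeff N = 0 := by
        intro t ht
        apply Polynomial.coeff_eq_zero_of_natDegree_lt
        have h4 := Polynomial.natDegree_mul_le (p := Polynomial.C (c t))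
          (q := ∏ j ∈ Finset.range t, (Polynomial.X - Polynomial.C (a j)))
        rw [hdeg t, Polynomial.natDegree_C, zero_add] at h4
        exact lt_of_le_of_lt h4 (Finset.mem_range.mp ht)
      have hmon : (∏ j ∈ Finset.range N, (Polynomial.X - Polynomial.C (a j))).Monic :=
        Polynomial.monic_prod_of_monic _ _ (fun j _ => Polynomial.monic_X_sub_C (a j))
      have hone : (∏ j ∈ Finset.range N, (Polynomial.X - Polynomial.C (a j))).coeff N = 1 := by
        have h3 := hmon.coeff_natDegree
        rwa [hdeg] at h3
      rw [Finset.sum_eq_zero hz, zero_add, Polynomial.coeff_C_mul, hone, mul_one] at h2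
      exact h2
    rcases Nat.lt_succ_iff_lt_or_eq.mp hk with h' | rfl
    · apply ih c _ k h'
      rw [Finset.sum_range_succ, hcN] at h
      simpa using h
    · exact hcN

private theorem stmt19_aux (m r : ℝ)
    (L : ℕ → ℕ → ℝ)
    (hL : ∀ n : ℕ, ∏ i ∈ Finset.range n, (Polynomial.X + Polynomial.C (r + i * m))
      = ∑ k ∈ Finset.range (n + 1), Polynomial.C (L n k) * ∏ j ∈ Finset.range k, (Polynomial.X - Polynomial.C (r + j * m)))
    (n k : ℕ) (hkn : k ≤ n) :
    L n k = (Nat.choose n k : ℝ) * ∏ i ∈ Finset.range (n - k), (2 * r + k * m + i * m) := by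
  have key := (hL n).symm.trans (hRlem m r n)
  have hzero : (∑ k ∈ Finset.range (n+1), Polynomial.C (L n k - Rwl m r n k)
      * ∏ j ∈ Finset.range k, (Polynomial.X - Polynomial.C (r + j * m))) = 0 := by
    simp only [Polynomial.C_sub, sub_mul]
    rw [Finset.sum_sub_distrib, key, sub_self]
  have h5 := indep (fun j => r + j * m) (n+1) (fun k => L n k - Rwl m r n k) hzero k (by omega)
  have h6 : L n k - Rwl m r n k = 0 := by simpa using h5
  have h7 : L n k = Rwl m r n k := by linarith
  rw [h7]; rfl

theorem stmt19 (m r : ℝ)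
    (L : ℕ → ℕ → ℝ)
    (hL : ∀ n : ℕ, ∏ i ∈ Finset.range n, (Polynomial.X + Polynomial.C (r + i * m))
      = ∑ k ∈ Finset.range (n + 1), Polynomial.C (L n k) * ∏ j ∈ Finset.range k, (Polynomial.X - Polynomial.C (r + j * m)))
    (n k : ℕ) (hkn : k ≤ n) :
    L n k = (Nat.choose n k : ℝ) * ∏ i ∈ Finset.range (n - k), (2 * r + k * m + i * m) :=
  stmt19_aux m r L hL n k hkn
end
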